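/- arXiv:1406.4549 — 7 statements merged into one kernel-verified Lean document; each statement's English description precedes it below -/
import Mathlib

section
/- Let H : [0,1] → [0,1]^d be a map such that for every m ≥ 0 and every 0 ≤ k < 2^{dm}, the image H([k/2^{dm},(k+1)/2^{dm}]) is contained in the union of an axis-parallel subcube of side 2^{-m} with one adjacent subcube (sharing a (d-1)-face), where consecutive intervals map into adjacent subcubes. Then H is Hölder continuous with exponent 1/d: for all x, y ∈ [0,1], ‖H(x) − H(y)‖ ≤ 2√(d+3)·|x−y|^{1/d}. -/
open Set

/-- The axis-parallel subcube of `[0,1]^d` of side `2^{-m}` indexed by `κ`. -/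
noncomputable def subcube (d m : ℕ) (κ : Fin d → ℕ) : Set (EuclideanSpace ℝ (Fin d)) :=
  {x | ∀ j, x j ∈ Set.Icc ((κ j : ℝ) / 2 ^ m) (((κ j : ℝ) + 1) / 2 ^ m)}

/-- Index vectors of two subcubes sharing a common `(d-1)`-dimensional face. -/
def adjacentIdx {d : ℕ} (κ κ' : Fin d → ℕ) : Prop :=
  ∃ j₀, (κ' j₀ = κ j₀ + 1 ∨ κ j₀ = κ' j₀ + 1) ∧ ∀ j, j ≠ j₀ → κ' j = κ j

lemma coord_same {m u : ℕ} {a b : ℝ}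
    (ha : a ∈ Set.Icc ((u:ℝ)/2^m) (((u:ℝ)+1)/2^m))
    (hb : b ∈ Set.Icc ((u:ℝ)/2^m) (((u:ℝ)+1)/2^m)) :
    |a - b| ≤ 1/2^m := by
  obtain ⟨ha1, ha2⟩ := ha
  obtain ⟨hb1, hb2⟩ := hb
  have e1 : ((u:ℝ)+1)/2^m - (u:ℝ)/2^m = 1/2^m := by ring
  rw [abs_sub_le_iff]
  constructor <;> linarith

lemma coord_adj' {m u : ℕ} {a b : ℝ}
    (ha : a ∈ Set.Icc ((u:ℝ)/2^m) (((u:ℝ)+1)/2^m))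
    (hb : b ∈ Set.Icc (((u:ℝ)+1)/2^m) (((u:ℝ)+2)/2^m)) :
    |a - b| ≤ 2/2^m := by
  obtain ⟨ha1, ha2⟩ := ha
  obtain ⟨hb1, hb2⟩ := hb
  have e1 : ((u:ℝ)+2)/2^m - (u:ℝ)/2^m = 2/2^m := by ring
  rw [abs_sub_le_iff]
  constructor <;> linarith

lemma coord_adj {m u v : ℕ} {a b : ℝ}
    (ha : a ∈ Set.Icc ((u:ℝ)/2^m) (((u:ℝ)+1)/2^m))
    (hb : b ∈ Set.Icc ((v:ℝ)/2^m) (((v:ℝ)+1)/2^m))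
    (huv : v = u + 1 ∨ u = v + 1) :
    |a - b| ≤ 2/2^m := by
  rcases huv with h | h
  · subst h
    push_cast at hb
    exact coord_adj' ha (by convert hb using 2 <;> ring)
  · subst h
    push_cast at ha
    rw [abs_sub_comm]
    exact coord_adj' hb (by convert ha using 2 <;> ring)

lemma norm_sub_le_subcube {d m : ℕ} {κ κ' : Fin d → ℕ}
    (h : κ = κ' ∨ adjacentIdx κ κ') {p q : EuclideanSpace ℝ (Fin d)}
    (hp : p ∈ subcube d m κ) (hq : q ∈ subcube d m κ') :
    ‖p - q‖ ≤ Real.sqrt (d + 3) / 2 ^ m := by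
  have h2m : (0:ℝ) < 2^m := by positivity
  have h4 : ((4:ℝ)^m) = (2^m)^2 := by
    rw [show (4:ℝ) = 2^2 by norm_num, ← pow_mul, mul_comm, pow_mul]
  have key : ∑ j, ‖p j - q j‖^2 ≤ ((d:ℝ)+3)/4^m := by
    rcases h with rfl | ⟨j₀, hj₀, hrest⟩
    · calc ∑ j, ‖p j - q j‖^2 ≤ ∑ _j : Fin d, ((1:ℝ)/2^m)^2 := by
            refine Finset.sum_le_sum fun j _ => ?_
            rw [Real.norm_eq_abs]
            have := coord_same (hp j) (hq j)
            exact pow_le_pow_left₀ (abs_nonneg _) this 2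
        _ = (d:ℝ) * (1/2^m)^2 := by
            rw [Finset.sum_const, Finset.card_univ, Fintype.card_fin, nsmul_eq_mul]
        _ ≤ ((d:ℝ)+3)/4^m := by
            rw [h4, le_div_iff₀ (by positivity : (0:ℝ) < (2^m)^2)]
            have e : ((1:ℝ)/2^m)^2 * (2^m)^2 = 1 := by
              field_simp
            rw [mul_assoc, e, mul_one]
            linarith
    · have hterm : ∀ j ∈ Finset.univ.erase j₀, ‖p j - q j‖^2 ≤ ((1:ℝ)/2^m)^2 := by
        intro j hj
        rw [Real.norm_eq_abs]
        have heq : κ' j = κ j := hrest j (Finset.mem_erase.1 hj).1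
        have := coord_same (hp j) (heq ▸ hq j)
        exact pow_le_pow_left₀ (abs_nonneg _) this 2
      have h0 : ‖p j₀ - q j₀‖^2 ≤ ((2:ℝ)/2^m)^2 := by
        rw [Real.norm_eq_abs]
        exact pow_le_pow_left₀ (abs_nonneg _) (coord_adj (hp j₀) (hq j₀) hj₀) 2
      have hd1 : 1 ≤ d := by
        rcases Nat.eq_zero_or_pos d with rfl | h
        · exact j₀.elim0
        · exact h
      calc ∑ j, ‖p j - q j‖^2
          = ‖p j₀ - q j₀‖^2 + ∑ j ∈ Finset.univ.erase j₀, ‖p j - q j‖^2 :=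
            (Finset.add_sum_erase _ _ (Finset.mem_univ j₀)).symm
        _ ≤ ((2:ℝ)/2^m)^2 + (d-1 : ℕ) * ((1:ℝ)/2^m)^2 := by
            refine add_le_add h0 ?_
            have := Finset.sum_le_card_nsmul _ _ _ hterm
            rwa [Finset.card_erase_of_mem (Finset.mem_univ j₀), Finset.card_univ,
              Fintype.card_fin, nsmul_eq_mul] at this
        _ ≤ ((d:ℝ)+3)/4^m := by
            apply le_of_eq
            rw [Nat.cast_sub hd1, h4]
            push_cast
            field_simp
            ring
  have hnorm : ‖p - q‖ = Real.sqrt (∑ j, ‖p j - q j‖^2) := by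
    simp only [EuclideanSpace.norm_eq, PiLp.sub_apply]
  rw [hnorm]
  calc Real.sqrt (∑ j, ‖p j - q j‖^2) ≤ Real.sqrt (((d:ℝ)+3)/4^m) :=
        Real.sqrt_le_sqrt key
    _ = Real.sqrt ((d:ℝ)+3) / 2^m := by
        rw [h4, Real.sqrt_div (by positivity : (0:ℝ) ≤ (d:ℝ)+3), Real.sqrt_sq h2m.le]

lemma step_lemma (d m : ℕ) (H : ℝ → EuclideanSpace ℝ (Fin d))
    (κ : ℕ → (Fin d → ℕ))
    (hadj : ∀ k, k + 1 < 2 ^ (d * m) → adjacentIdx (κ k) (κ (k + 1)))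
    (himg : ∀ k : ℕ, k < 2 ^ (d * m) →
      H '' Set.Icc ((k : ℝ) / 2 ^ (d * m)) (((k : ℝ) + 1) / 2 ^ (d * m))
        ⊆ subcube d m (κ k))
    {x y : ℝ} (hx : x ∈ Set.Icc (0:ℝ) 1) (hy : y ∈ Set.Icc (0:ℝ) 1)
    (hxy : x ≤ y) (hclose : y - x ≤ 1 / 2 ^ (d * m)) :
    ‖H x - H y‖ ≤ Real.sqrt (d + 3) / 2 ^ m := by
  set N : ℕ := 2 ^ (d * m) with hN
  have hN1 : 1 ≤ N := Nat.one_le_two_pow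
  have hNR : ((N:ℝ)) = 2 ^ (d * m) := by push_cast [hN]; ring
  have hNpos : (0:ℝ) < (N:ℝ) := by positivity
  obtain ⟨hx0, hx1⟩ := hx
  obtain ⟨hy0, hy1⟩ := hy
  set k : ℕ := min ⌊x * N⌋₊ (N - 1) with hk
  have hkN : k < N := lt_of_le_of_lt (min_le_right _ _) (Nat.sub_lt hN1 one_pos)
  have hkx : (k:ℝ) / N ≤ x := by
    have h1 : (k:ℝ) ≤ ⌊x * N⌋₊ := by exact_mod_cast min_le_left _ _
    have h2 : (⌊x * N⌋₊ : ℝ) ≤ x * N := Nat.floor_le (by positivity)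
    rw [div_le_iff₀ hNpos]
    linarith
  have hxk : x ≤ ((k:ℝ) + 1) / N := by
    rcases lt_or_ge ⌊x * N⌋₊ N with hc | hc
    · have hke : k = ⌊x * N⌋₊ := min_eq_left (Nat.le_sub_one_of_lt hc)
      have h2 : x * N < ⌊x * N⌋₊ + 1 := Nat.lt_floor_add_one _
      rw [le_div_iff₀ hNpos, hke]
      push_cast
      linarith
    · have hke : k = N - 1 := by
        apply min_eq_right
        omega
      have : ((k:ℝ) + 1) = N := by
        rw [hke, Nat.cast_sub hN1]
        push_cast
        ring
      rw [this]
      rw [le_div_iff₀ hNpos]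
      nlinarith
  rcases le_or_gt y (((k:ℝ) + 1) / N) with hcase | hcase
  · -- both in interval k
    have hHx : H x ∈ subcube d m (κ k) := by
      apply himg k hkN
      exact ⟨x, ⟨by rwa [← hNR], by rwa [← hNR]⟩, rfl⟩
    have hHy : H y ∈ subcube d m (κ k) := by
      apply himg k hkN
      refine ⟨y, ⟨?_, by rwa [← hNR]⟩, rfl⟩
      rw [← hNR]; linarith
    exact norm_sub_le_subcube (Or.inl rfl) hHx hHy
  · -- y in interval k+1
    have hk1N : k + 1 < N := by
      by_contra hcon
      have : N = k + 1 := by omega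
      rw [this] at hcase
      push_cast at hcase
      rw [div_self (by positivity)] at hcase
      linarith
    have hHx : H x ∈ subcube d m (κ k) := by
      apply himg k hkN
      exact ⟨x, ⟨by rwa [← hNR], by rwa [← hNR]⟩, rfl⟩
    have hHy : H y ∈ subcube d m (κ (k + 1)) := by
      apply himg (k + 1) hk1N
      refine ⟨y, ⟨?_, ?_⟩, rfl⟩
      · rw [← hNR]
        push_cast
        linarith
      · rw [← hNR]
        push_cast
        have hx2 : x ≤ ((k:ℝ) + 1) / N := hxk
        have : y ≤ x + 1 / N := by
          rw [hNR] at *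
          linarith
        have e : ((k:ℝ) + 1) / N + 1 / N = ((k:ℝ) + 1 + 1) / N := by ring
        linarith
    exact norm_sub_le_subcube (Or.inr (hadj k hk1N)) hHx hHy

/-- A map satisfying the dyadic subdivision/adjacency property of the Hilbert curve
is Hölder continuous with exponent `1/d`. -/
theorem holder_of_hilbert_property (d : ℕ) (hd : 1 ≤ d)
    (H : ℝ → EuclideanSpace ℝ (Fin d))
    (hsub : ∀ m : ℕ, ∃ κ : ℕ → (Fin d → ℕ),
      (∀ k, k < 2 ^ (d * m) → ∀ j, κ k j < 2 ^ m) ∧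
      (∀ k, k + 1 < 2 ^ (d * m) → adjacentIdx (κ k) (κ (k + 1))) ∧
      (∀ k : ℕ, k < 2 ^ (d * m) →
        H '' Set.Icc ((k : ℝ) / 2 ^ (d * m)) (((k : ℝ) + 1) / 2 ^ (d * m))
          ⊆ subcube d m (κ k))) :
    ∀ x ∈ Set.Icc (0 : ℝ) 1, ∀ y ∈ Set.Icc (0 : ℝ) 1,
      ‖H x - H y‖ ≤ 2 * Real.sqrt (d + 3) * |x - y| ^ ((1 : ℝ) / d) := by
  have hdR : (0:ℝ) < d := by exact_mod_cast hd
  have main : ∀ x ∈ Set.Icc (0:ℝ) 1, ∀ y ∈ Set.Icc (0:ℝ) 1, x ≤ y →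
      ‖H x - H y‖ ≤ 2 * Real.sqrt (d + 3) * |x - y| ^ ((1 : ℝ) / d) := by
    intro x hx y hy hxy
    rcases eq_or_lt_of_le hxy with rfl | hlt
    · rw [sub_self, norm_zero]
      positivity
    · set t : ℝ := y - x with ht
      have htpos : 0 < t := by simp only [ht]; linarith
      have ht1 : t ≤ 1 := by
        obtain ⟨hx0, _⟩ := hx
        obtain ⟨_, hy1⟩ := hy
        simp only [ht]; linarith
      have habs : |x - y| = t := by
        rw [abs_sub_comm, abs_of_pos htpos]
      rw [habs]
      have hexists : ∃ m : ℕ, (1:ℝ) / 2 ^ (d * (m + 1)) < t := by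
        obtain ⟨n, hn⟩ := exists_pow_lt_of_lt_one htpos
          (by
            have h2d : (2:ℝ) ≤ 2 ^ d := by
              calc (2:ℝ) = 2 ^ 1 := (pow_one 2).symm
              _ ≤ 2 ^ d := pow_le_pow_right₀ (by norm_num) hd
            rw [div_lt_one (by positivity)]
            linarith : (1:ℝ) / 2 ^ d < 1)
        refine ⟨n, lt_of_le_of_lt ?_ hn⟩
        rw [div_pow, one_pow, ← pow_mul]
        apply div_le_div_of_nonneg_left (by norm_num) (by positivity)
        apply pow_le_pow_right₀ (by norm_num)
        nlinarith [Nat.one_le_iff_ne_zero.1 hd]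
      classical
      obtain ⟨m, hm1, hm2⟩ : ∃ m : ℕ, (1:ℝ)/2^(d*(m+1)) < t ∧ t ≤ 1/2^(d*m) := by
        refine ⟨Nat.find hexists, Nat.find_spec hexists, ?_⟩
        rcases Nat.eq_zero_or_pos (Nat.find hexists) with h0 | h0
        · rw [h0]
          simpa using ht1
        · have hmin := Nat.find_min hexists (Nat.sub_lt h0 one_pos)
          push_neg at hmin
          have e0 : Nat.find hexists - 1 + 1 = Nat.find hexists := by omega
          rwa [e0] at hmin
      obtain ⟨κ, hκlt, hadj, himg⟩ := hsub m
      have hstep := step_lemma d m H κ hadj himg hx hy hxy (by rw [← ht]; exact hm2)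
      have hrpow : (1:ℝ)/2^(m+1) ≤ t ^ ((1:ℝ)/d) := by
        have h1 : ((1:ℝ)/2^(d*(m+1))) ^ ((1:ℝ)/d) ≤ t ^ ((1:ℝ)/d) :=
          Real.rpow_le_rpow (by positivity) hm1.le (by positivity)
        have e : ((2:ℝ)^(d*(m+1))) ^ ((1:ℝ)/d) = 2^(m+1) := by
          rw [← Real.rpow_natCast (2:ℝ) (d*(m+1)), ← Real.rpow_mul (by norm_num),
            ← Real.rpow_natCast (2:ℝ) (m+1)]
          congr 1
          push_cast
          field_simp
        rwa [Real.div_rpow (by norm_num) (by positivity), Real.one_rpow, e] at h1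
      calc ‖H x - H y‖ ≤ Real.sqrt (d + 3) / 2 ^ m := hstep
        _ = 2 * Real.sqrt (d + 3) * ((1:ℝ)/2^(m+1)) := by
            rw [pow_succ]
            field_simp
        _ ≤ 2 * Real.sqrt (d + 3) * t ^ ((1:ℝ)/d) := by
            apply mul_le_mul_of_nonneg_left hrpow (by positivity)
  intro x hx y hy
  rcases le_total x y with h | h
  · exact main x hx y hy h
  · rw [norm_sub_rev, abs_sub_comm]
    exact main y hy x hx h
end

section
/- Let d ≥ 2 and let H : [0,1] → [0,1]^d be measure-preserving (λ_1(A) = λ_d(H(A)) for measurable A, where images of disjoint intervals overlap in measure zero) and Hölder continuous with ‖H(x)−H(y)‖ ≤ 2√(d+3)|x−y|^{1/d}. Let x_1,…,x_n ∈ [0,1] be such that each interval [(k−1)/n, k/n), k = 1,…,n, contains exactly one x_i, and set P_i = H(x_i). Then the star-discrepancy satisfies D*_n(P) ≤ 4d√(d+3)·n^{−1/d} + C·n^{−2/d} for a constant C depending only on d. -/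
/-!
Cut `[0,1)` into the strata `[k/n, (k+1)/n)`. Since `H` preserves measure and images of disjoint
sets overlap in a null set, the images of the strata have volume `1/n` each and tile the unit cube
up to a null set; by Hölder continuity each image stays within `δ = 2√(d+3)·n^{-1/d}` of the
sample point it contains. So the images of the strata whose sample point lies in the box `[0,a)`
cover `[0, a - δ)` up to a null set and lie in `[0, a + δ]`: the proportion of counted points is
squeezed between the volumes of these two boxes, both within `dδ` of `∏ aⱼ`. In particular the
constant `C` can be taken to be `0`.
-/

open Set MeasureTheory
open scoped NNReal

def stratum (n k : ℕ) : Set ℝ := Ico ((k : ℝ) / n) (((k : ℝ) + 1) / n)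

section Stratum

variable {n k l : ℕ} {s t : ℝ}

lemma measurableSet_stratum : MeasurableSet (stratum n k) := measurableSet_Ico

lemma volume_stratum : volume (stratum n k) = ENNReal.ofReal (1 / n) := by
  rw [stratum, Real.volume_Ico]
  ring_nf

lemma mem_stratum_iff_floor_eq (hn : 0 < n) (ht : 0 ≤ t) : t ∈ stratum n k ↔ ⌊t * n⌋₊ = k := by
  have hn' : (0 : ℝ) < n := Nat.cast_pos.mpr hn
  rw [Nat.floor_eq_iff (by positivity), stratum, mem_Ico, div_le_iff₀ hn', lt_div_iff₀ hn']

lemma eq_of_mem_stratum (hn : 0 < n) (hk : t ∈ stratum n k) (hl : t ∈ stratum n l) : k = l := by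
  have ht : 0 ≤ t := le_trans (by positivity) hk.1
  exact ((mem_stratum_iff_floor_eq hn ht).1 hk).symm.trans ((mem_stratum_iff_floor_eq hn ht).1 hl)

lemma disjoint_stratum (hn : 0 < n) (h : k ≠ l) : Disjoint (stratum n k) (stratum n l) :=
  disjoint_left.2 fun _ hk hl => h (eq_of_mem_stratum hn hk hl)

lemma exists_lt_mem_stratum (hn : 0 < n) (ht : t ∈ Ico (0 : ℝ) 1) : ∃ k < n, t ∈ stratum n k := by
  have hn' : (0 : ℝ) < n := Nat.cast_pos.mpr hn
  refine ⟨⌊t * n⌋₊, ?_, (mem_stratum_iff_floor_eq hn ht.1).2 rfl⟩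
  rw [Nat.floor_lt (mul_nonneg ht.1 hn'.le)]
  nlinarith [ht.2]

lemma Icc_div_subset_Icc_zero_one (hk : k < n) :
    Icc ((k : ℝ) / n) (((k : ℝ) + 1) / n) ⊆ Icc 0 1 := by
  have hn' : (0 : ℝ) < n := Nat.cast_pos.mpr (k.zero_le.trans_lt hk)
  refine Icc_subset_Icc (by positivity) ((div_le_one hn').2 ?_)
  exact_mod_cast hk

lemma stratum_subset_Icc (hk : k < n) : stratum n k ⊆ Icc 0 1 :=
  Ico_subset_Icc_self.trans (Icc_div_subset_Icc_zero_one hk)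

lemma dist_le_of_mem_stratum (hs : s ∈ stratum n k) (ht : t ∈ stratum n k) : dist s t ≤ 1 / n := by
  have hwidth : ((k : ℝ) + 1) / n = k / n + 1 / n := by ring
  rw [stratum, mem_Ico, hwidth] at hs ht
  rw [Real.dist_eq, abs_le]
  constructor <;> linarith

lemma exists_equiv_mem_stratum {x : Fin n → ℝ} (hx : ∀ k : Fin n, ∃! i, x i ∈ stratum n k) :
    ∃ σ : Fin n ≃ Fin n, ∀ i, x i ∈ stratum n (σ i) := by
  choose f hf _ using hx
  have hinj : Function.Injective f := fun k l hkl =>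
    Fin.ext (eq_of_mem_stratum k.pos (hf k) (hkl ▸ hf l))
  let e := Equiv.ofBijective f (Finite.injective_iff_bijective.mp hinj)
  refine ⟨e.symm, fun i => ?_⟩
  simpa only [show f (e.symm i) = i from e.apply_symm_apply i] using hf (e.symm i)

end Stratum

lemma Finset.prod_sub_prod_le_sum_sub {ι : Type*} (s : Finset ι) {u v : ι → ℝ}
    (hu : ∀ j ∈ s, 0 ≤ u j) (huv : ∀ j ∈ s, u j ≤ v j) (hv : ∀ j ∈ s, v j ≤ 1) :
    ∏ j ∈ s, v j - ∏ j ∈ s, u j ≤ ∑ j ∈ s, (v j - u j) := by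
  classical
  induction s using Finset.induction_on with
  | empty => simp
  | insert j s hj ih =>
    simp only [Finset.mem_insert, forall_eq_or_imp] at hu huv hv
    rw [Finset.prod_insert hj, Finset.prod_insert hj, Finset.sum_insert hj]
    have hPu0 : 0 ≤ ∏ i ∈ s, u i := Finset.prod_nonneg hu.2
    have hPu1 : ∏ i ∈ s, u i ≤ 1 :=
      Finset.prod_le_one hu.2 fun i hi => (huv.2 i hi).trans (hv.2 i hi)
    have hPuv : ∏ i ∈ s, u i ≤ ∏ i ∈ s, v i := Finset.prod_le_prod hu.2 huv.2
    have ih := ih hu.2 huv.2 hv.2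
    have hvj : 0 ≤ v j := hu.1.trans huv.1
    -- `v P_v - u P_u = v (P_v - P_u) + (v - u) P_u`
    nlinarith [mul_le_mul_of_nonneg_right hv.1 (sub_nonneg.2 hPuv),
      mul_le_mul_of_nonneg_left hPu1 (sub_nonneg.2 huv.1)]

lemma Finset.prod_sub_prod_le_card_mul {ι : Type*} (s : Finset ι) {u v : ι → ℝ} {δ : ℝ}
    (hu : ∀ j ∈ s, 0 ≤ u j) (huv : ∀ j ∈ s, u j ≤ v j) (hv : ∀ j ∈ s, v j ≤ 1)
    (hδ : ∀ j ∈ s, v j - u j ≤ δ) :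
    ∏ j ∈ s, v j - ∏ j ∈ s, u j ≤ s.card * δ := by
  simpa using (s.prod_sub_prod_le_sum_sub hu huv hv).trans (s.sum_le_card_nsmul _ δ hδ)

lemma HolderOnWith.of_dist_le {X Y : Type*} [PseudoMetricSpace X] [PseudoMetricSpace Y]
    {C r : ℝ≥0} {f : X → Y} {s : Set X}
    (h : ∀ x ∈ s, ∀ y ∈ s, dist (f x) (f y) ≤ C * dist x y ^ (r : ℝ)) : HolderOnWith C r f s := by
  intro x hx y hy
  rw [edist_dist, edist_dist, ENNReal.ofReal_rpow_of_nonneg dist_nonneg r.coe_nonneg,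
    ← ENNReal.ofReal_coe_nnreal, ← ENNReal.ofReal_mul C.coe_nonneg]
  exact ENNReal.ofReal_le_ofReal (h x hx y hy)

lemma ContinuousOn.nullMeasurableSet_image_Ico {E : Type*} [TopologicalSpace E] [T2Space E]
    [MeasurableSpace E] [OpensMeasurableSpace E] {μ : Measure E} [NullSingletonClass μ]
    {f : ℝ → E} {a b : ℝ} (hf : ContinuousOn f (Icc a b)) : NullMeasurableSet (f '' Ico a b) μ := by
  have hsub : f '' Icc a b \ f '' Ico a b ⊆ {f b} := by
    rintro _ ⟨⟨t, ht, rfl⟩, hnot⟩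
    obtain rfl | hlt := ht.2.eq_or_lt
    · rfl
    · exact absurd (mem_image_of_mem f (⟨ht.1, hlt⟩ : t ∈ Ico a b)) hnot
  refine (isCompact_Icc.image_of_continuousOn hf).measurableSet.nullMeasurableSet.congr ?_
  refine ae_eq_set.2 ⟨measure_mono_null hsub (measure_singleton _), ?_⟩
  rw [sdiff_eq_empty.2 (image_mono Ico_subset_Icc_self), measure_empty]

namespace EuclideanSpace

variable {ι : Type*} [Fintype ι]

lemma abs_sub_apply_le_norm_sub (x y : EuclideanSpace ℝ ι) (j : ι) : |x j - y j| ≤ ‖x - y‖ :=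
  PiLp.norm_apply_le (x - y) j

lemma volume_setOf_forall_mem (s : ι → Set ℝ) :
    volume {y : EuclideanSpace ℝ ι | ∀ j, y j ∈ s j} = ∏ j, volume (s j) := by
  have hbox : {y : EuclideanSpace ℝ ι | ∀ j, y j ∈ s j}
      = (MeasurableEquiv.toLp 2 (ι → ℝ)).symm ⁻¹' univ.pi s := by
    ext
    simp
  rw [hbox, (volume_preserving_symm_measurableEquiv_toLp ι).measure_preimage_equiv, volume_pi_pi]

lemma volume_setOf_forall_mem_Icc (b : ι → ℝ) (hb : ∀ j, 0 ≤ b j) :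
    volume {y : EuclideanSpace ℝ ι | ∀ j, y j ∈ Icc 0 (b j)} = ENNReal.ofReal (∏ j, b j) := by
  simp_rw [volume_setOf_forall_mem, Real.volume_Icc, sub_zero,
    ENNReal.ofReal_prod_of_nonneg fun j _ => hb j]

lemma volume_setOf_forall_mem_Ico (b : ι → ℝ) (hb : ∀ j, 0 ≤ b j) :
    volume {y : EuclideanSpace ℝ ι | ∀ j, y j ∈ Ico 0 (b j)} = ENNReal.ofReal (∏ j, b j) := by
  simp_rw [volume_setOf_forall_mem, Real.volume_Ico, sub_zero,
    ENNReal.ofReal_prod_of_nonneg fun j _ => hb j]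

end EuclideanSpace

structure IsMeasurePreservingCurve {ι : Type*} [Fintype ι] (H : ℝ → EuclideanSpace ℝ ι) : Prop where
  mapsTo_cube : ∀ x ∈ Icc (0 : ℝ) 1, H x ∈ {y : EuclideanSpace ℝ ι | ∀ j, y j ∈ Icc (0 : ℝ) 1}
  volume_image : ∀ A : Set ℝ, A ⊆ Icc (0 : ℝ) 1 → MeasurableSet A → volume (H '' A) = volume A
  volume_image_inter_image : ∀ A B : Set ℝ, A ⊆ Icc (0 : ℝ) 1 → B ⊆ Icc (0 : ℝ) 1 →
    Disjoint A B → volume (H '' A ∩ H '' B) = 0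

namespace IsMeasurePreservingCurve

open EuclideanSpace

variable {ι : Type*} [Fintype ι] [Nonempty ι] {H : ℝ → EuclideanSpace ℝ ι}

lemma volume_biUnion_image_stratum (hH : IsMeasurePreservingCurve H)
    (hcont : ContinuousOn H (Icc 0 1)) {α : Type*} {n : ℕ} {κ : α → Fin n}
    (hκ : Function.Injective κ) (T : Finset α) :
    volume (⋃ i ∈ T, H '' stratum n (κ i)) = ENNReal.ofReal (T.card / n) := by
  have hsub : ∀ i, stratum n (κ i) ⊆ Icc 0 1 := fun i => stratum_subset_Icc (κ i).is_lt
  rw [measure_biUnion_finset₀]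
  · simp_rw [hH.volume_image _ (hsub _) measurableSet_stratum, volume_stratum]
    rw [Finset.sum_const, nsmul_eq_mul, ← ENNReal.ofReal_natCast,
      ← ENNReal.ofReal_mul (Nat.cast_nonneg _), mul_one_div]
  · intro i _ i' _ hne
    exact hH.volume_image_inter_image _ _ (hsub i) (hsub i')
      (disjoint_stratum (κ i).pos (Fin.val_injective.ne (hκ.ne hne)))
  · intro i _
    exact (hcont.mono (Icc_div_subset_Icc_zero_one (κ i).is_lt)).nullMeasurableSet_image_Ico

lemma volume_cube_diff_image_Ico (hH : IsMeasurePreservingCurve H)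
    (hcont : ContinuousOn H (Icc 0 1)) :
    volume ({y : EuclideanSpace ℝ ι | ∀ j, y j ∈ Icc (0 : ℝ) 1} \ H '' Ico 0 1) = 0 := by
  have himage : volume (H '' Ico (0 : ℝ) 1) = 1 := by
    rw [hH.volume_image _ Ico_subset_Icc_self measurableSet_Ico, Real.volume_Ico, sub_zero,
      ENNReal.ofReal_one]
  have hcube : volume {y : EuclideanSpace ℝ ι | ∀ j, y j ∈ Icc (0 : ℝ) 1} = 1 := by
    simpa using volume_setOf_forall_mem_Icc (fun _ : ι => (1 : ℝ)) fun _ => zero_le_one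
  have hsub : H '' Ico 0 1 ⊆ {y : EuclideanSpace ℝ ι | ∀ j, y j ∈ Icc (0 : ℝ) 1} := by
    rintro _ ⟨t, ht, rfl⟩
    exact hH.mapsTo_cube t (Ico_subset_Icc_self ht)
  rw [measure_sdiff hsub hcont.nullMeasurableSet_image_Ico (by simp [himage]), himage, hcube,
    tsub_self]

variable {n : ℕ} {x : Fin n → ℝ} {σ : Fin n ≃ Fin n} {δ : ℝ} {a : ι → ℝ} {T : Finset (Fin n)}

lemma card_div_le_prod_min (hH : IsMeasurePreservingCurve H) (hcont : ContinuousOn H (Icc 0 1))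
    (hδ0 : 0 ≤ δ) (hδ : ∀ i, ∀ t ∈ stratum n (σ i), ‖H t - H (x i)‖ ≤ δ) (ha : ∀ j, 0 ≤ a j)
    (hT : ∀ i ∈ T, ∀ j, H (x i) j < a j) :
    (T.card : ℝ) / n ≤ ∏ j, min (a j + δ) 1 := by
  have hb : ∀ j, 0 ≤ min (a j + δ) 1 := fun j => le_min (by linarith [ha j]) zero_le_one
  have hcover : ⋃ i ∈ T, H '' stratum n (σ i)
      ⊆ {y : EuclideanSpace ℝ ι | ∀ j, y j ∈ Icc 0 (min (a j + δ) 1)} := by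
    simp only [iUnion_subset_iff]
    rintro i hi _ ⟨t, ht, rfl⟩ j
    have hdev := (abs_le.1 ((abs_sub_apply_le_norm_sub _ _ j).trans (hδ i t ht))).2
    have hcube := hH.mapsTo_cube t (stratum_subset_Icc (σ i).is_lt ht) j
    exact ⟨hcube.1, le_min (by linarith [hT i hi j]) hcube.2⟩
  have hle := measure_mono (μ := volume) hcover
  rwa [hH.volume_biUnion_image_stratum hcont σ.injective, volume_setOf_forall_mem_Icc _ hb,
    ENNReal.ofReal_le_ofReal_iff (Finset.prod_nonneg fun j _ => hb j)] at hle

lemma prod_max_le_card_div (hH : IsMeasurePreservingCurve H) (hcont : ContinuousOn H (Icc 0 1))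
    (hn : 0 < n) (hσ : ∀ i, x i ∈ stratum n (σ i)) (hδ0 : 0 ≤ δ)
    (hδ : ∀ i, ∀ t ∈ stratum n (σ i), ‖H t - H (x i)‖ ≤ δ) (ha : ∀ j, a j ≤ 1)
    (hT : ∀ i, (∀ j, H (x i) j ∈ Ico 0 (a j)) → i ∈ T) :
    ∏ j, max (a j - δ) 0 ≤ (T.card : ℝ) / n := by
  set L := {y : EuclideanSpace ℝ ι | ∀ j, y j ∈ Ico 0 (max (a j - δ) 0)}
  have hLcube : L ⊆ {y : EuclideanSpace ℝ ι | ∀ j, y j ∈ Icc (0 : ℝ) 1} := fun y hy j =>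
    ⟨(hy j).1, (hy j).2.le.trans (max_le (by linarith [ha j]) zero_le_one)⟩
  have hcover : L ∩ H '' Ico 0 1 ⊆ ⋃ i ∈ T, H '' stratum n (σ i) := by
    rintro _ ⟨hy, t, ht, rfl⟩
    obtain ⟨k, hk, htk⟩ := exists_lt_mem_stratum hn ht
    set i := σ.symm ⟨k, hk⟩
    have hti : t ∈ stratum n (σ i) := by simpa [i] using htk
    refine mem_biUnion (hT i fun j => ⟨?_, ?_⟩) (mem_image_of_mem H hti)
    · exact (hH.mapsTo_cube _ (stratum_subset_Icc (σ i).is_lt (hσ i)) j).1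
    · by_contra! hge
      have hdev := (abs_le.1 ((abs_sub_apply_le_norm_sub _ _ j).trans (hδ i t hti))).1
      exact (hy j).2.not_ge (max_le (by linarith) (hy j).1)
  have hle : volume L ≤ ENNReal.ofReal (T.card / n) :=
    calc volume L ≤ volume (L ∩ H '' Ico 0 1) + volume (L \ H '' Ico 0 1) :=
          measure_le_inter_add_sdiff _ _ _
      _ = volume (L ∩ H '' Ico 0 1) := by
          rw [measure_mono_null (sdiff_subset_sdiff_left hLcube)
            (hH.volume_cube_diff_image_Ico hcont), add_zero]
      _ ≤ volume (⋃ i ∈ T, H '' stratum n (σ i)) := measure_mono hcover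
      _ = ENNReal.ofReal (T.card / n) := hH.volume_biUnion_image_stratum hcont σ.injective T
  rwa [volume_setOf_forall_mem_Ico _ fun j => le_max_right _ _,
    ENNReal.ofReal_le_ofReal_iff (by positivity)] at hle

theorem abs_card_div_sub_prod_le (hH : IsMeasurePreservingCurve H)
    (hcont : ContinuousOn H (Icc 0 1)) (hn : 0 < n) (hx : ∀ k : Fin n, ∃! i, x i ∈ stratum n k)
    (hδ0 : 0 ≤ δ) (hδ : ∀ k < n, ∀ s ∈ stratum n k, ∀ t ∈ stratum n k, ‖H s - H t‖ ≤ δ)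
    (ha : ∀ j, a j ∈ Icc 0 1) (hT : ∀ i, i ∈ T ↔ ∀ j, H (x i) j ∈ Ico 0 (a j)) :
    |(T.card : ℝ) / n - ∏ j, a j| ≤ Fintype.card ι * δ := by
  obtain ⟨σ, hσ⟩ := exists_equiv_mem_stratum hx
  have hδσ : ∀ i, ∀ t ∈ stratum n (σ i), ‖H t - H (x i)‖ ≤ δ :=
    fun i t ht => hδ _ (σ i).is_lt t ht _ (hσ i)
  have hupper := hH.card_div_le_prod_min hcont hδ0 hδσ (fun j => (ha j).1)
    fun i hi j => ((hT i).1 hi j).2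
  have hlower := hH.prod_max_le_card_div hcont hn hσ hδ0 hδσ (fun j => (ha j).2)
    fun i => (hT i).2
  have hprod_upper : ∏ j, min (a j + δ) 1 - ∏ j, a j ≤ Fintype.card ι * δ := by
    simpa using Finset.univ.prod_sub_prod_le_card_mul (fun j _ => (ha j).1)
      (fun j _ => le_min (by linarith) (ha j).2) (fun j _ => min_le_right _ _)
      (fun j _ => by linarith [min_le_left (a j + δ) 1])
  have hprod_lower : ∏ j, a j - ∏ j, max (a j - δ) 0 ≤ Fintype.card ι * δ := by
    simpa using Finset.univ.prod_sub_prod_le_card_mul (fun j _ => le_max_right _ _)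
      (fun j _ => max_le (by linarith) (ha j).1) (fun j _ => (ha j).2)
      (fun j _ => by linarith [le_max_left (a j - δ) 0])
  rw [abs_le]
  constructor <;> linarith

theorem abs_card_div_sub_prod_le_of_holder (hH : IsMeasurePreservingCurve H) {C r : ℝ}
    (hC : 0 ≤ C) (hr : 0 < r)
    (hHolder : ∀ s ∈ Icc (0 : ℝ) 1, ∀ t ∈ Icc (0 : ℝ) 1, ‖H s - H t‖ ≤ C * |s - t| ^ r)
    (hn : 0 < n) (hx : ∀ k : Fin n, ∃! i, x i ∈ stratum n k) (ha : ∀ j, a j ∈ Icc 0 1)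
    (hT : ∀ i, i ∈ T ↔ ∀ j, H (x i) j ∈ Ico 0 (a j)) :
    |(T.card : ℝ) / n - ∏ j, a j| ≤ Fintype.card ι * (C * (n : ℝ) ^ (-r)) := by
  have hcont : ContinuousOn H (Icc 0 1) :=
    (HolderOnWith.of_dist_le (C := ⟨C, hC⟩) (r := ⟨r, hr.le⟩) fun s hs t ht => by
      rw [dist_eq_norm, Real.dist_eq]
      exact hHolder s hs t ht).continuousOn hr
  refine hH.abs_card_div_sub_prod_le hcont hn hx (by positivity) (fun k hk s hs t ht => ?_) ha hT
  calc ‖H s - H t‖ ≤ C * |s - t| ^ r :=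
        hHolder s (stratum_subset_Icc hk hs) t (stratum_subset_Icc hk ht)
    _ ≤ C * (1 / n) ^ r := by
        gcongr
        exact dist_le_of_mem_stratum hs ht
    _ = C * (n : ℝ) ^ (-r) := by
        rw [one_div, Real.inv_rpow (Nat.cast_nonneg n), Real.rpow_neg (Nat.cast_nonneg n)]

end IsMeasurePreservingCurve

open scoped Classical in
/-- Star-discrepancy bound for stratified points mapped by a measure-preserving,
`1/d`-Hölder curve such as the Hilbert curve: there is a constant `C` depending
only on `d` such that the discrepancy at every anchored box is at most
`4d√(d+3)·n^{-1/d} + C·n^{-2/d}`. -/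
theorem star_discrepancy_stratified_hilbert (d : ℕ) (hd : 2 ≤ d) :
    ∃ C : ℝ, ∀ (H : ℝ → EuclideanSpace ℝ (Fin d)),
      (∀ x ∈ Set.Icc (0 : ℝ) 1, H x ∈ {y : EuclideanSpace ℝ (Fin d) | ∀ j, y j ∈ Set.Icc (0 : ℝ) 1}) →
      -- measure preservation
      (∀ A : Set ℝ, A ⊆ Set.Icc (0 : ℝ) 1 → MeasurableSet A → volume (H '' A) = volume A) →
      -- images of disjoint subsets of [0,1] overlap in measure zero
      (∀ A B : Set ℝ, A ⊆ Set.Icc (0 : ℝ) 1 → B ⊆ Set.Icc (0 : ℝ) 1 → Disjoint A B →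
        volume (H '' A ∩ H '' B) = 0) →
      -- Hölder continuity with exponent 1/d
      (∀ x ∈ Set.Icc (0 : ℝ) 1, ∀ y ∈ Set.Icc (0 : ℝ) 1,
        ‖H x - H y‖ ≤ 2 * Real.sqrt (d + 3) * |x - y| ^ ((1 : ℝ) / d)) →
      ∀ (n : ℕ), 0 < n → ∀ x : Fin n → ℝ,
        (∀ i, x i ∈ Set.Icc (0 : ℝ) 1) →
        -- each interval [(k-1)/n, k/n) contains exactly one of the points
        (∀ k : Fin n, ∃! i : Fin n, x i ∈ Set.Ico ((k : ℝ) / n) (((k : ℝ) + 1) / n)) →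
        ∀ a : Fin d → ℝ, (∀ j, a j ∈ Set.Icc (0 : ℝ) 1) →
          |((Finset.univ.filter (fun i =>
              H (x i) ∈ {y : EuclideanSpace ℝ (Fin d) | ∀ j, y j ∈ Set.Ico 0 (a j)})).card : ℝ) / n
            - ∏ j, a j|
          ≤ 4 * d * Real.sqrt (d + 3) * (n : ℝ) ^ (-(1 : ℝ) / d)
            + C * (n : ℝ) ^ (-(2 : ℝ) / d) := by
  have hd0 : 0 < d := by omega
  have : Nonempty (Fin d) := ⟨⟨0, hd0⟩⟩
  refine ⟨0, fun H hrange hmp hdisj hholder n hn x _ hstrat a ha => ?_⟩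
  have hδ : 0 ≤ d * √(d + 3) * (n : ℝ) ^ (-(1 : ℝ) / d) := by positivity
  refine (IsMeasurePreservingCurve.abs_card_div_sub_prod_le_of_holder ⟨hrange, hmp, hdisj⟩
    (by positivity) (one_div_pos.2 (Nat.cast_pos.2 hd0)) hholder hn hstrat ha fun i => ?_).trans ?_
  · simp
  · rw [Fintype.card_fin, ← neg_div, zero_mul, add_zero]
    linarith
end

section
/- Let E_1,…,E_n be pairwise disjoint measurable subsets of [0,1]^d, each of Lebesgue measure 1/n, each of diameter at most ε = 2√(d+3)·n^{−1/d}, and let S = [0,a) be an anchored box. Then the number B of indices k such that E_k intersects both S and its complement satisfies B ≤ 2n(dε + O(ε²)); more precisely B ≤ n·λ_d(S_+ \ S_−) where S_± are the ε-enlarged and ε-shrunk boxes, and λ_d(S_+ \ S_−) ≤ 2dε·(1+ε)^{d−1}. -/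
open Set MeasureTheory

open scoped ENNReal

/-!
A cell of diameter at most `ε` that meets both `S` and `[0,1]^d \ S` has every coordinate within
`ε` of a point of `S` and of a point outside `S`. Hence it misses `S₋` and, up to the null faces
`{x_j = 1}` of the closed cube, lies in `S₊`; so each straddling cell puts its full mass `1/n` into
the shell `S₊ \ S₋`, and disjointness bounds their number by `n λ(S₊ \ S₋)`. If `b_j ≥ c_j` are
the side lengths of `S₊ ⊇ S₋`, all in `[0,1]`, the shell volume is
`∏ b_j - ∏ c_j ≤ ∑ (b_j - c_j) ≤ 2dε`.
-/

lemma prod_sub_prod_le_sum_sub {κ : Type*} (s : Finset κ) {b c : κ → ℝ} (hc : ∀ i, 0 ≤ c i)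
    (hcb : ∀ i, c i ≤ b i) (hb : ∀ i, b i ≤ 1) :
    ∏ i ∈ s, b i - ∏ i ∈ s, c i ≤ ∑ i ∈ s, (b i - c i) := by
  induction s using Finset.cons_induction with
  | empty => simp
  | cons k s hk ih =>
    rw [Finset.prod_cons, Finset.prod_cons, Finset.sum_cons]
    have hcb_prod : ∏ i ∈ s, c i ≤ ∏ i ∈ s, b i :=
      Finset.prod_le_prod (fun i _ => hc i) (fun i _ => hcb i)
    have hb_prod : ∏ i ∈ s, b i ≤ 1 :=
      Finset.prod_le_one (fun i _ => (hc i).trans (hcb i)) (fun i _ => hb i)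
    have hc_prod : 0 ≤ ∏ i ∈ s, c i := Finset.prod_nonneg fun i _ => hc i
    nlinarith [hc k, hcb k, hb k]

lemma card_mul_le_measure {α κ : Type*} [MeasurableSpace α] {μ : Measure α} {F : κ → Set α}
    {s : Finset κ} {T : Set α} {c : ℝ≥0∞} (hmeas : ∀ i ∈ s, MeasurableSet (F i))
    (hdisj : (s : Set κ).PairwiseDisjoint F) (hc : ∀ i ∈ s, c ≤ μ (F i ∩ T)) :
    (s.card : ℝ≥0∞) * c ≤ μ T := by
  calc (s.card : ℝ≥0∞) * c = ∑ i ∈ s, c := by simp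
    _ ≤ ∑ i ∈ s, μ.restrict T (F i) :=
      Finset.sum_le_sum fun i hi => (hc i hi).trans_eq (Measure.restrict_apply (hmeas i hi)).symm
    _ ≤ μ.restrict T univ := sum_measure_le_measure_univ
      (fun i hi => (hmeas i hi).nullMeasurableSet) fun i hi j hj hij => (hdisj hi hj hij).aedisjoint
    _ = μ T := by simp

variable {ι : Type*}

def anchoredBox (b : ι → ℝ) : Set (EuclideanSpace ℝ ι) := {x | ∀ j, x j ∈ Ico 0 (b j)}

def unitCube (ι : Type*) : Set (EuclideanSpace ℝ ι) := {x | ∀ j, x j ∈ Icc 0 1}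

lemma anchoredBox_eq_preimage (b : ι → ℝ) :
    anchoredBox b = WithLp.ofLp ⁻¹' univ.pi fun j => Ico 0 (b j) := by
  ext; simp [anchoredBox]

lemma measurableSet_anchoredBox [Fintype ι] (b : ι → ℝ) : MeasurableSet (anchoredBox b) := by
  rw [anchoredBox_eq_preimage]
  exact (PiLp.volume_preserving_ofLp ι).measurable (.univ_pi fun _ => measurableSet_Ico)

lemma volume_anchoredBox [Fintype ι] (b : ι → ℝ) :
    volume (anchoredBox b) = ∏ j, ENNReal.ofReal (b j) := by
  rw [anchoredBox_eq_preimage, (PiLp.volume_preserving_ofLp ι).measure_preimage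
    (MeasurableSet.univ_pi fun _ => measurableSet_Ico).nullMeasurableSet, volume_pi_pi]
  simp

lemma volume_anchoredBox_ne_top [Fintype ι] (b : ι → ℝ) : volume (anchoredBox b) ≠ ∞ := by
  simp [volume_anchoredBox, ENNReal.prod_ne_top]

lemma measureReal_anchoredBox [Fintype ι] {b : ι → ℝ} (hb : ∀ j, 0 ≤ b j) :
    volume.real (anchoredBox b) = ∏ j, b j := by
  simp [measureReal_def, volume_anchoredBox, ENNReal.toReal_prod, hb]

lemma anchoredBox_mono {b c : ι → ℝ} (h : ∀ j, c j ≤ b j) : anchoredBox c ⊆ anchoredBox b :=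
  fun _ hx j => ⟨(hx j).1, (hx j).2.trans_le (h j)⟩

lemma volume_setOf_apply_eq [Fintype ι] (j : ι) (c : ℝ) :
    volume {x : EuclideanSpace ℝ ι | x j = c} = 0 := by
  rw [show {x : EuclideanSpace ℝ ι | x j = c} = WithLp.ofLp ⁻¹' {f | f j = c} from rfl,
    (PiLp.volume_preserving_ofLp ι).measure_preimage
      (measurableSet_eq_fun (measurable_pi_apply j) measurable_const).nullMeasurableSet]
  simpa [volume_pi] using Measure.pi_hyperplane (fun _ : ι => (volume : Measure ℝ)) j c

lemma isBounded_unitCube [Fintype ι] : Bornology.IsBounded (unitCube ι) := by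
  have : unitCube ι = WithLp.toLp 2 '' univ.pi fun _ => Icc 0 1 := by
    rw [image_eq_preimage_of_inverse (WithLp.ofLp_toLp 2) (WithLp.toLp_ofLp 2)]
    ext; simp [unitCube, Pi.le_def, forall_and]
  rw [this]
  exact ((isCompact_univ_pi fun _ => isCompact_Icc).image (PiLp.continuous_toLp 2 _)).isBounded

lemma abs_sub_apply_le_of_diam_le [Fintype ι] {E : Set (EuclideanSpace ℝ ι)} {ε : ℝ}
    (hE : Bornology.IsBounded E) (hdiam : Metric.diam E ≤ ε) {z w : EuclideanSpace ℝ ι}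
    (hz : z ∈ E) (hw : w ∈ E) (j : ι) : |z j - w j| ≤ ε :=
  (PiLp.dist_apply_le z w j).trans ((Metric.dist_le_diam_of_mem hE hz hw).trans hdiam)

variable {E : Set (EuclideanSpace ℝ ι)} {a : ι → ℝ} {ε : ℝ}

lemma disjoint_shrunk_anchoredBox (hspread : ∀ z ∈ E, ∀ w ∈ E, ∀ j, |z j - w j| ≤ ε)
    (hnonneg : ∀ z ∈ E, ∀ j, 0 ≤ z j) {y : EuclideanSpace ℝ ι} (hy : y ∈ E)
    (hyS : y ∉ anchoredBox a) : Disjoint E (anchoredBox fun j => max (a j - ε) 0) := by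
  refine disjoint_left.2 fun z hz hzS => ?_
  obtain ⟨j, hj⟩ : ∃ j, a j ≤ y j := by
    simpa [anchoredBox, hnonneg y hy] using hyS
  have hzj := (hzS j).2
  have := abs_le.mp (hspread y hy z hz j)
  rw [lt_max_iff] at hzj
  rcases hzj with h | h
  · linarith
  · linarith [hnonneg z hz j]

lemma sdiff_enlarged_anchoredBox_subset (hspread : ∀ z ∈ E, ∀ w ∈ E, ∀ j, |z j - w j| ≤ ε)
    (hE : E ⊆ unitCube ι) {x : EuclideanSpace ℝ ι} (hx : x ∈ E) (hxS : x ∈ anchoredBox a) :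
    E \ anchoredBox (fun j => min (a j + ε) 1) ⊆ ⋃ j, {z | z j = 1} := by
  rintro z ⟨hz, hzS⟩
  -- the closed cube pokes out of the half-open box `S₊` only through its faces `z j = 1`
  obtain ⟨j, hj⟩ : ∃ j, min (a j + ε) 1 ≤ z j := by
    simp only [anchoredBox, mem_ofPred_eq, mem_Ico, not_forall, not_and, not_lt] at hzS
    obtain ⟨j, hj⟩ := hzS
    exact ⟨j, hj (hE hz j).1⟩
  have := abs_le.mp (hspread z hz x hx j)
  have hxj := (hxS j).2
  rw [min_le_iff] at hj
  refine mem_iUnion.2 ⟨j, le_antisymm (hE hz j).2 ?_⟩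
  rcases hj with h | h
  · linarith
  · exact h

lemma volume_le_volume_inter_shell [Fintype ι]
    (hspread : ∀ z ∈ E, ∀ w ∈ E, ∀ j, |z j - w j| ≤ ε) (hE : E ⊆ unitCube ι)
    {x y : EuclideanSpace ℝ ι} (hx : x ∈ E ∩ anchoredBox a) (hy : y ∈ E \ anchoredBox a) :
    volume E ≤ volume (E ∩ (anchoredBox (fun j => min (a j + ε) 1) \
      anchoredBox (fun j => max (a j - ε) 0))) := by
  have hnull : volume (E \ anchoredBox (fun j => min (a j + ε) 1)) = 0 :=
    measure_mono_null (sdiff_enlarged_anchoredBox_subset hspread hE hx.1 hx.2)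
      (measure_iUnion_null fun j => volume_setOf_apply_eq j 1)
  have hdisj := disjoint_shrunk_anchoredBox hspread (fun z hz j => (hE hz j).1) hy.1 hy.2
  calc volume E ≤ volume (E ∩ anchoredBox (fun j => min (a j + ε) 1)) +
        volume (E \ anchoredBox (fun j => min (a j + ε) 1)) := measure_le_inter_add_sdiff _ _ _
    _ = _ := by
      rw [hnull, add_zero, ← inter_sdiff_assoc,
        (hdisj.mono_left inter_subset_left).sdiff_eq_left]

lemma measureReal_anchoredBox_sdiff_le [Fintype ι] {b c : ι → ℝ} (hc : ∀ i, 0 ≤ c i)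
    (hcb : ∀ i, c i ≤ b i) (hb : ∀ i, b i ≤ 1) :
    volume.real (anchoredBox b \ anchoredBox c) ≤ ∑ j, (b j - c j) := by
  rw [measureReal_sdiff (anchoredBox_mono hcb) (measurableSet_anchoredBox c)
      (volume_anchoredBox_ne_top b),
    measureReal_anchoredBox fun j => (hc j).trans (hcb j), measureReal_anchoredBox hc]
  exact prod_sub_prod_le_sum_sub _ hc hcb hb

open scoped Classical in
theorem card_boundary_cells_le_general (d n : ℕ) (hn : 0 < n)
    (E : Fin n → Set (EuclideanSpace ℝ (Fin d)))
    (hmeas : ∀ k, MeasurableSet (E k))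
    (hsub : ∀ k, E k ⊆ {x | ∀ j, x j ∈ Set.Icc (0 : ℝ) 1})
    (hdisj : Pairwise (Function.onFun Disjoint E))
    (hvol : ∀ k, volume (E k) = 1 / n)
    (a : Fin d → ℝ) (ha : ∀ j, a j ∈ Set.Icc (0 : ℝ) 1)
    (ε : ℝ) (hε : ε = 2 * Real.sqrt (d + 3) * (n : ℝ) ^ (-(1 : ℝ) / d))
    (hdiam : ∀ k, Metric.diam (E k) ≤ ε) :
    ((Finset.univ.filter (fun k =>
        (E k ∩ {x | ∀ j, x j ∈ Set.Ico 0 (a j)}).Nonempty ∧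
        (E k ∩ ({x | ∀ j, x j ∈ Set.Icc (0 : ℝ) 1}
          \ {x | ∀ j, x j ∈ Set.Ico 0 (a j)})).Nonempty)).card : ℝ)
      ≤ n * (volume ({x : EuclideanSpace ℝ (Fin d) | ∀ j, x j ∈ Set.Ico 0 (min (a j + ε) 1)}
          \ {x | ∀ j, x j ∈ Set.Ico 0 (max (a j - ε) 0)})).toReal ∧
    (volume ({x : EuclideanSpace ℝ (Fin d) | ∀ j, x j ∈ Set.Ico 0 (min (a j + ε) 1)}
        \ {x | ∀ j, x j ∈ Set.Ico 0 (max (a j - ε) 0)})).toReal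
      ≤ 2 * d * ε * (1 + ε) ^ (d - 1) := by
  have hε0 : 0 ≤ ε := hε ▸ by positivity
  have hshell_fin : volume (anchoredBox (fun j => min (a j + ε) 1) \
      anchoredBox (fun j => max (a j - ε) 0)) ≠ ⊤ :=
    measure_ne_top_of_subset sdiff_subset (volume_anchoredBox_ne_top _)
  have hspread : ∀ k, ∀ z ∈ E k, ∀ w ∈ E k, ∀ j, |z j - w j| ≤ ε := fun k _ hz _ hw =>
    abs_sub_apply_le_of_diam_le (isBounded_unitCube.subset (hsub k)) (hdiam k) hz hw
  refine ⟨?_, ?_⟩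
  · have hcells := card_mul_le_measure (μ := volume) (s := Finset.univ.filter fun k =>
        (E k ∩ anchoredBox a).Nonempty ∧ (E k ∩ (unitCube (Fin d) \ anchoredBox a)).Nonempty)
      (fun k _ => hmeas k) (fun i _ j _ hij => hdisj hij) fun k hk => by
        obtain ⟨-, ⟨x, hx⟩, ⟨y, hyE, -, hyS⟩⟩ := Finset.mem_filter.1 hk
        exact (hvol k).ge.trans (volume_le_volume_inter_shell (hspread k) (hsub k) hx ⟨hyE, hyS⟩)
    have h := ENNReal.toReal_mono hshell_fin hcells
    rw [ENNReal.toReal_mul, ENNReal.toReal_div] at h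
    simp only [ENNReal.toReal_natCast, ENNReal.toReal_one] at h
    rwa [mul_one_div, div_le_iff₀' (by exact_mod_cast hn)] at h
  · calc _ ≤ ∑ j, (min (a j + ε) 1 - max (a j - ε) 0) :=
          measureReal_anchoredBox_sdiff_le (fun j => le_max_right _ _)
            (fun j => max_le (le_min (by linarith) (by linarith [(ha j).2]))
              (le_min (by linarith [(ha j).1]) zero_le_one))
            fun j => min_le_right _ _
      _ ≤ ∑ _j : Fin d, 2 * ε := Finset.sum_le_sum fun j _ => by
          linarith [min_le_left (a j + ε) 1, le_max_left (a j - ε) 0]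
      _ = 2 * d * ε * 1 := by
          rw [Finset.sum_const, Finset.card_univ, Fintype.card_fin, nsmul_eq_mul]; ring
      _ ≤ 2 * d * ε * (1 + ε) ^ (d - 1) := by gcongr; exact one_le_pow₀ (by linarith)

open scoped Classical in
/-- The number of cells of measure `1/n` and diameter at most
`ε = 2√(d+3)·n^{-1/d}` straddling the boundary of an anchored box is at most
`n` times the volume of the boundary shell, which is at most `2dε(1+ε)^{d-1}`. -/
theorem card_boundary_cells_le (d n : ℕ) (hd : 1 ≤ d) (hn : 0 < n)
    (E : Fin n → Set (EuclideanSpace ℝ (Fin d)))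
    (hmeas : ∀ k, MeasurableSet (E k))
    (hsub : ∀ k, E k ⊆ {x | ∀ j, x j ∈ Set.Icc (0 : ℝ) 1})
    (hdisj : Pairwise (Function.onFun Disjoint E))
    (hvol : ∀ k, volume (E k) = 1 / n)
    (a : Fin d → ℝ) (ha : ∀ j, a j ∈ Set.Icc (0 : ℝ) 1)
    (ε : ℝ) (hε : ε = 2 * Real.sqrt (d + 3) * (n : ℝ) ^ (-(1 : ℝ) / d))
    (hdiam : ∀ k, Metric.diam (E k) ≤ ε) :
    ((Finset.univ.filter (fun k =>
        (E k ∩ {x | ∀ j, x j ∈ Set.Ico 0 (a j)}).Nonempty ∧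
        (E k ∩ ({x | ∀ j, x j ∈ Set.Icc (0 : ℝ) 1}
          \ {x | ∀ j, x j ∈ Set.Ico 0 (a j)})).Nonempty)).card : ℝ)
      ≤ n * (volume ({x : EuclideanSpace ℝ (Fin d) | ∀ j, x j ∈ Set.Ico 0 (min (a j + ε) 1)}
          \ {x | ∀ j, x j ∈ Set.Ico 0 (max (a j - ε) 0)})).toReal ∧
    (volume ({x : EuclideanSpace ℝ (Fin d) | ∀ j, x j ∈ Set.Ico 0 (min (a j + ε) 1)}
        \ {x | ∀ j, x j ∈ Set.Ico 0 (max (a j - ε) 0)})).toReal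
      ≤ 2 * d * ε * (1 + ε) ^ (d - 1) :=
  card_boundary_cells_le_general d n hn E hmeas hsub hdisj hvol a ha ε hε hdiam
end

section
/- Let b ≥ 2 and d ≥ 2 be integers. Suppose that for every m ≥ 0, any set of b^m consecutive-index van der Corput points in base b yields (after applying a map H) a point set in [0,1]^d with star-discrepancy at most C₁·b^{−m/d} + C₂·b^{−2m/d}. Then for any n ≥ 1, the first n points P_1,…,P_n satisfy D*_n(P) ≤ (C₁(b−1)/(1 − b^{−(d−1)/d}))·n^{−1/d} + O(n^{−2/d} log n). -/
open Set

section Aux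

lemma vdcAux_card_fin_filter (n : ℕ) (p : ℕ → Prop) [DecidablePred p] :
    (Finset.univ.filter (fun i : Fin n => p i)).card = ((Finset.range n).filter p).card := by
  rw [Finset.card_filter, Finset.card_filter,
    Fin.sum_univ_eq_sum_range (fun i => if p i then 1 else 0) n]

lemma vdcAux_card_fin_filter_shift (k s : ℕ) (p : ℕ → Prop) [DecidablePred p] :
    (Finset.univ.filter (fun i : Fin k => p (s + i))).card
      = ((Finset.Ico s (s + k)).filter p).card := by
  rw [Finset.card_filter, Finset.card_filter,
    Fin.sum_univ_eq_sum_range (fun i => if p (s + i) then 1 else 0) k,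
    Finset.sum_Ico_eq_sum_range]
  simp

lemma vdcAux_cnt_add (p : ℕ → Prop) [DecidablePred p] (s x y : ℕ) :
    (((Finset.Ico s (s + (x + y))).filter p).card : ℝ)
      = (((Finset.Ico s (s + x)).filter p).card : ℝ)
        + (((Finset.Ico (s + x) (s + x + y)).filter p).card : ℝ) := by
  rw [← Nat.cast_add, ← Finset.card_union_of_disjoint, ← Finset.filter_union,
    Finset.Ico_union_Ico_eq_Ico (by omega) (by omega), add_assoc]
  exact Finset.disjoint_filter_filter (Finset.Ico_disjoint_Ico_consecutive s (s+x) (s+x+y))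

lemma vdcAux_repBound (b : ℕ) (p : ℕ → Prop) [DecidablePred p] (V : ℝ) (g : ℕ → ℝ)
    (hg : ∀ t s, |(((Finset.Ico s (s + b ^ t)).filter p).card : ℝ) - (b : ℝ) ^ t * V| ≤ g t) :
    ∀ r t s, |(((Finset.Ico s (s + r * b ^ t)).filter p).card : ℝ) - (r * (b : ℝ) ^ t) * V|
      ≤ r * g t := by
  intro r
  induction r with
  | zero => intro t s; simp
  | succ r ih =>
    intro t s
    have hsplit : (r + 1) * b ^ t = r * b ^ t + b ^ t := by ring
    rw [hsplit, vdcAux_cnt_add]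
    have h1 := ih t s
    have h2 := hg t (s + r * b ^ t)
    push_cast
    calc |(((Finset.Ico s (s + r * b ^ t)).filter p).card : ℝ)
            + (((Finset.Ico (s + r * b ^ t) (s + r * b ^ t + b ^ t)).filter p).card : ℝ)
            - ((r : ℝ) + 1) * (b : ℝ) ^ t * V|
        = |((((Finset.Ico s (s + r * b ^ t)).filter p).card : ℝ) - (r * (b : ℝ) ^ t) * V)
            + ((((Finset.Ico (s + r * b ^ t) (s + r * b ^ t + b ^ t)).filter p).card : ℝ)
              - (b : ℝ) ^ t * V)| := by ring_nf
      _ ≤ _ + _ := abs_add_le _ _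
      _ ≤ r * g t + g t := add_le_add h1 h2
      _ = (r + 1) * g t := by ring

lemma vdcAux_blockBound (b : ℕ) (hb : 2 ≤ b) (p : ℕ → Prop) [DecidablePred p] (V : ℝ)
    (g : ℕ → ℝ) (hg0 : ∀ t, 0 ≤ g t)
    (hg : ∀ t s, |(((Finset.Ico s (s + b ^ t)).filter p).card : ℝ) - (b : ℝ) ^ t * V| ≤ g t) :
    ∀ n t s, |(((Finset.Ico s (s + n * b ^ t)).filter p).card : ℝ) - (n * (b : ℝ) ^ t) * V|
      ≤ ((b : ℝ) - 1) * ∑ j ∈ Finset.range (Nat.digits b n).length, g (t + j) := by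
  intro n
  induction n using Nat.strong_induction_on with
  | _ n ih =>
    rcases Nat.eq_zero_or_pos n with rfl | hn
    · intro t s; simp
    intro t s
    set q := n / b with hq
    set r := n % b with hr
    have hdm : b * q + r = n := Nat.div_add_mod n b
    have hqlt : q < n := Nat.div_lt_self hn (by omega)
    have hrlt : r < b := Nat.mod_lt n (by omega)
    have hsplit : n * b ^ t = q * b ^ (t + 1) + r * b ^ t := by
      rw [← hdm]; ring
    have hlen : (Nat.digits b n).length = (Nat.digits b q).length + 1 := by
      rw [Nat.digits_def' (by omega : 1 < b) hn]; rfl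
    rw [hsplit, vdcAux_cnt_add]
    have h1 := ih q hqlt (t + 1) s
    have h2 := vdcAux_repBound b p V g hg r t (s + q * b ^ (t + 1))
    have key : |((((Finset.Ico s (s + q * b ^ (t+1))).filter p).card : ℝ)
            - (q * (b : ℝ) ^ (t+1)) * V)
          + ((((Finset.Ico (s + q * b ^ (t+1)) (s + q * b ^ (t+1) + r * b ^ t)).filter p).card : ℝ)
            - (r * (b : ℝ) ^ t) * V)|
        ≤ ((b : ℝ) - 1) * ∑ j ∈ Finset.range (Nat.digits b q).length, g (t + 1 + j)
            + ((b : ℝ) - 1) * g t := by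
      refine (abs_add_le _ _).trans (add_le_add h1 (h2.trans ?_))
      have : (r : ℝ) ≤ (b : ℝ) - 1 := by
        have : (r : ℝ) + 1 ≤ (b : ℝ) := by exact_mod_cast hrlt
        linarith
      exact mul_le_mul_of_nonneg_right this (hg0 t)
    have hcast : ((n : ℝ) * (b : ℝ) ^ t) * V
        = (q * (b : ℝ) ^ (t+1)) * V + (r * (b : ℝ) ^ t) * V := by
      have : (n : ℝ) = (b : ℝ) * q + r := by exact_mod_cast hdm.symm
      rw [this]; ring
    rw [hcast, hlen]
    have hsum : ∑ j ∈ Finset.range ((Nat.digits b q).length + 1), g (t + j)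
        = g t + ∑ j ∈ Finset.range (Nat.digits b q).length, g (t + 1 + j) := by
      rw [Finset.sum_range_succ']
      simp only [Nat.add_zero]
      rw [add_comm]
      congr 1
      apply Finset.sum_congr rfl
      intro j _
      congr 1
      omega
    rw [hsum]
    have habs : (((Finset.Ico s (s + q * b ^ (t+1))).filter p).card : ℝ)
          + (((Finset.Ico (s + q * b ^ (t+1)) (s + q * b ^ (t+1) + r * b ^ t)).filter p).card : ℝ)
          - ((q * (b : ℝ) ^ (t+1)) * V + (r * (b : ℝ) ^ t) * V)
        = ((((Finset.Ico s (s + q * b ^ (t+1))).filter p).card : ℝ)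
            - (q * (b : ℝ) ^ (t+1)) * V)
          + ((((Finset.Ico (s + q * b ^ (t+1)) (s + q * b ^ (t+1) + r * b ^ t)).filter p).card : ℝ)
            - (r * (b : ℝ) ^ t) * V) := by ring
    rw [habs]
    refine key.trans (le_of_eq ?_)
    ring

lemma vdcAux_rpow1 (x : ℝ) (hx : 0 < x) (e : ℝ) (m : ℕ) :
    (x ^ m : ℝ) ^ e * x ^ m = (x ^ (e + 1)) ^ m := by
  rw [← Real.rpow_natCast x m, ← Real.rpow_natCast (x ^ (e + 1)) m,
      ← Real.rpow_mul hx.le, ← Real.rpow_mul hx.le, ← Real.rpow_add hx]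
  congr 1
  ring

lemma vdcAux_rpow2 (x : ℝ) (hx : 0 < x) (e : ℝ) (m : ℕ) :
    ((x ^ e) ^ m : ℝ) = (x ^ m : ℝ) ^ e := by
  rw [← Real.rpow_natCast (x ^ e) m, ← Real.rpow_natCast x m,
      ← Real.rpow_mul hx.le, ← Real.rpow_mul hx.le, mul_comm]

end Aux

/-- The `i`-th point of the van der Corput sequence in base `b` (radical inverse). -/
noncomputable def vdc (b i : ℕ) : ℝ :=
  ∑ k ∈ Finset.range (Nat.digits b i).length, ((Nat.digits b i).getD k 0 : ℝ) / (b : ℝ) ^ (k + 1)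

set_option maxHeartbeats 1000000 in
open scoped Classical in
/-- If every block of `b^m` consecutive van der Corput points (mapped by `H`) has
star-discrepancy at most `C₁·b^{-m/d} + C₂·b^{-2m/d}`, then the first `n` points have
star-discrepancy at most `(C₁(b-1)/(1-b^{-(d-1)/d}))·n^{-1/d} + O(n^{-2/d}·log n)`. -/
theorem vdc_star_discrepancy (b d : ℕ) (hb : 2 ≤ b) (hd : 2 ≤ d)
    (H : ℝ → EuclideanSpace ℝ (Fin d)) (C₁ C₂ : ℝ) (hC₁ : 0 ≤ C₁) (hC₂ : 0 ≤ C₂)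
    (hblock : ∀ m s : ℕ, ∀ a : Fin d → ℝ, (∀ j, a j ∈ Set.Icc (0 : ℝ) 1) →
      |((Finset.univ.filter (fun i : Fin (b ^ m) =>
          H (vdc b (s + (i : ℕ))) ∈ {y : EuclideanSpace ℝ (Fin d) | ∀ j, y j ∈ Set.Ico 0 (a j)})).card : ℝ)
          / (b : ℝ) ^ m - ∏ j, a j|
        ≤ C₁ * ((b : ℝ) ^ m) ^ (-(1 : ℝ) / d) + C₂ * ((b : ℝ) ^ m) ^ (-(2 : ℝ) / d)) :
    ∃ C : ℝ, ∀ n : ℕ, 2 ≤ n → ∀ a : Fin d → ℝ, (∀ j, a j ∈ Set.Icc (0 : ℝ) 1) →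
      |((Finset.univ.filter (fun i : Fin n =>
          H (vdc b (i : ℕ)) ∈ {y : EuclideanSpace ℝ (Fin d) | ∀ j, y j ∈ Set.Ico 0 (a j)})).card : ℝ)
          / n - ∏ j, a j|
        ≤ C₁ * (b - 1) / (1 - (b : ℝ) ^ (-((d : ℝ) - 1) / d)) * (n : ℝ) ^ (-(1 : ℝ) / d)
          + C * (n : ℝ) ^ (-(2 : ℝ) / d) * Real.log n := by
  have hb0 : (0 : ℝ) < (b : ℝ) := by positivity
  have hb1 : (1 : ℝ) < (b : ℝ) := by exact_mod_cast (by omega : 1 < b)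
  have hd0 : (0 : ℝ) < (d : ℝ) := by
    have : (0:ℕ) < d := by omega
    exact_mod_cast this
  have hd2 : (2 : ℝ) ≤ (d : ℝ) := by exact_mod_cast hd
  have hdne : (d : ℝ) ≠ 0 := ne_of_gt hd0
  set β : ℝ := (b : ℝ) ^ (((d : ℝ) - 1) / d) with hβdef
  set γ : ℝ := (b : ℝ) ^ (((d : ℝ) - 2) / d) with hγdef
  have hβ1 : 1 < β := by
    rw [hβdef]
    rw [Real.one_lt_rpow_iff_of_pos hb0]
    left
    exact ⟨hb1, div_pos (by linarith) hd0⟩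
  have hβ0 : 0 < β := lt_trans one_pos hβ1
  have hγ1 : 1 ≤ γ := by
    rw [hγdef]
    apply Real.one_le_rpow hb1.le
    apply div_nonneg (by linarith) hd0.le
  have hγ0 : 0 < γ := lt_of_lt_of_le one_pos hγ1
  have hbm1 : (0 : ℝ) ≤ (b : ℝ) - 1 := by linarith
  refine ⟨((b : ℝ) - 1) * C₂ * (2 / Real.log 2), ?_⟩
  intro n hn a ha
  have hnne : n ≠ 0 := by omega
  have hn0 : (0 : ℝ) < (n : ℝ) := by
    have : (0:ℕ) < n := by omega
    exact_mod_cast this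
  set V := ∏ j, a j with hV
  -- the error bound for blocks
  have hg : ∀ t s : ℕ, |(((Finset.Ico s (s + b ^ t)).filter
        (fun i => H (vdc b i) ∈ {y : EuclideanSpace ℝ (Fin d) | ∀ j, y j ∈ Set.Ico 0 (a j)})).card : ℝ)
        - (b : ℝ) ^ t * V| ≤ C₁ * β ^ t + C₂ * γ ^ t := by
    intro t s
    have h := hblock t s a ha
    have hcard : ((Finset.univ.filter (fun i : Fin (b ^ t) =>
        H (vdc b (s + (i : ℕ))) ∈ {y : EuclideanSpace ℝ (Fin d) | ∀ j, y j ∈ Set.Ico 0 (a j)})).card)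
        = (((Finset.Ico s (s + b ^ t)).filter
            (fun i => H (vdc b i) ∈ {y : EuclideanSpace ℝ (Fin d) | ∀ j, y j ∈ Set.Ico 0 (a j)})).card) :=
      vdcAux_card_fin_filter_shift (b ^ t) s
        (fun i => H (vdc b i) ∈ {y : EuclideanSpace ℝ (Fin d) | ∀ j, y j ∈ Set.Ico 0 (a j)})
    rw [hcard] at h
    have hbt : (0 : ℝ) < (b : ℝ) ^ t := by positivity
    set X : ℝ := (((Finset.Ico s (s + b ^ t)).filter
        (fun i => H (vdc b i) ∈ {y : EuclideanSpace ℝ (Fin d) | ∀ j, y j ∈ Set.Ico 0 (a j)})).card : ℝ) with hX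
    have habs : |X - (b : ℝ) ^ t * V| = |X / (b : ℝ) ^ t - V| * (b : ℝ) ^ t := by
      rw [← abs_of_pos hbt, ← abs_mul, abs_of_pos hbt]
      congr 1
      field_simp
    have e1 : ((b : ℝ) ^ t) ^ (-(1 : ℝ) / d) * (b : ℝ) ^ t = β ^ t := by
      rw [vdcAux_rpow1 _ hb0, hβdef]
      congr 2
      field_simp
      ring
    have e2 : ((b : ℝ) ^ t) ^ (-(2 : ℝ) / d) * (b : ℝ) ^ t = γ ^ t := by
      rw [vdcAux_rpow1 _ hb0, hγdef]
      congr 2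
      field_simp
      ring
    calc |X - (b : ℝ) ^ t * V| = |X / (b : ℝ) ^ t - V| * (b : ℝ) ^ t := habs
      _ ≤ (C₁ * ((b : ℝ) ^ t) ^ (-(1 : ℝ) / d) + C₂ * ((b : ℝ) ^ t) ^ (-(2 : ℝ) / d)) * (b : ℝ) ^ t :=
          mul_le_mul_of_nonneg_right h hbt.le
      _ = C₁ * β ^ t + C₂ * γ ^ t := by rw [add_mul, mul_assoc, mul_assoc, e1, e2]
  have hg0 : ∀ t : ℕ, (0 : ℝ) ≤ C₁ * β ^ t + C₂ * γ ^ t := by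
    intro t
    have := pow_nonneg hβ0.le t
    have := pow_nonneg hγ0.le t
    positivity
  have hmain := vdcAux_blockBound b hb
    (fun i => H (vdc b i) ∈ {y : EuclideanSpace ℝ (Fin d) | ∀ j, y j ∈ Set.Ico 0 (a j)}) V
    (fun m => C₁ * β ^ m + C₂ * γ ^ m) hg0 hg n 0 0
  simp only [pow_zero, mul_one, zero_add] at hmain
  rw [← Finset.range_eq_Ico] at hmain
  -- rewrite the goal's count
  have hcard1 : ((Finset.univ.filter (fun i : Fin n =>
      H (vdc b (i : ℕ)) ∈ {y : EuclideanSpace ℝ (Fin d) | ∀ j, y j ∈ Set.Ico 0 (a j)})).card)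
      = (((Finset.range n).filter
          (fun i => H (vdc b i) ∈ {y : EuclideanSpace ℝ (Fin d) | ∀ j, y j ∈ Set.Ico 0 (a j)})).card) :=
    vdcAux_card_fin_filter n
      (fun i => H (vdc b i) ∈ {y : EuclideanSpace ℝ (Fin d) | ∀ j, y j ∈ Set.Ico 0 (a j)})
  rw [hcard1]
  set X : ℝ := (((Finset.range n).filter
      (fun i => H (vdc b i) ∈ {y : EuclideanSpace ℝ (Fin d) | ∀ j, y j ∈ Set.Ico 0 (a j)})).card : ℝ) with hX
  -- digits length
  set k := Nat.log b n with hk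
  have hL : (Nat.digits b n).length = k + 1 := Nat.digits_len b n (lt_of_lt_of_le one_lt_two hb) hnne
  rw [hL] at hmain
  have hbkn : ((b : ℝ) ^ k) ≤ (n : ℝ) := by
    have := Nat.pow_log_le_self b hnne
    exact_mod_cast this
  -- sum bounds
  have hSβ : ∑ j ∈ Finset.range (k + 1), β ^ j ≤ β * (n : ℝ) ^ (((d : ℝ) - 1) / d) / (β - 1) := by
    rw [geom_sum_eq (ne_of_gt hβ1)]
    rw [div_le_div_iff_of_pos_right (by linarith : (0:ℝ) < β - 1)]
    have hβk : β ^ k ≤ (n : ℝ) ^ (((d : ℝ) - 1) / d) := by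
      rw [hβdef, vdcAux_rpow2 _ hb0]
      exact Real.rpow_le_rpow (by positivity) hbkn (div_nonneg (by linarith) hd0.le)
    have : β ^ (k + 1) = β * β ^ k := by ring
    nlinarith [pow_nonneg hβ0.le k]
  have hSγ : ∑ j ∈ Finset.range (k + 1), γ ^ j ≤ ((k : ℝ) + 1) * (n : ℝ) ^ (((d : ℝ) - 2) / d) := by
    have hγk : γ ^ k ≤ (n : ℝ) ^ (((d : ℝ) - 2) / d) := by
      rw [hγdef, vdcAux_rpow2 _ hb0]
      exact Real.rpow_le_rpow (by positivity) hbkn (div_nonneg (by linarith) hd0.le)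
    calc ∑ j ∈ Finset.range (k + 1), γ ^ j ≤ ∑ j ∈ Finset.range (k + 1), γ ^ k := by
          apply Finset.sum_le_sum
          intro j hj
          exact pow_le_pow_right₀ hγ1 (by simpa using Nat.lt_succ_iff.mp (Finset.mem_range.mp hj))
      _ = ((k : ℝ) + 1) * γ ^ k := by
          rw [Finset.sum_const, Finset.card_range, nsmul_eq_mul]
          push_cast
          ring
      _ ≤ ((k : ℝ) + 1) * (n : ℝ) ^ (((d : ℝ) - 2) / d) := by
          apply mul_le_mul_of_nonneg_left hγk
          positivity
  -- rpow identities
  have hid1 : 1 - (b : ℝ) ^ (-((d : ℝ) - 1) / d) = (β - 1) / β := by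
    rw [neg_div, Real.rpow_neg hb0.le, ← hβdef]
    field_simp
  have hnpow1 : (n : ℝ) ^ (((d : ℝ) - 1) / d) = (n : ℝ) ^ (-(1 : ℝ) / d) * n := by
    have he : ((d : ℝ) - 1) / d = -(1 : ℝ) / d + 1 := by field_simp; ring
    rw [he, Real.rpow_add hn0, Real.rpow_one]
  have hnpow2 : (n : ℝ) ^ (((d : ℝ) - 2) / d) = (n : ℝ) ^ (-(2 : ℝ) / d) * n := by
    have he : ((d : ℝ) - 2) / d = -(2 : ℝ) / d + 1 := by field_simp; ring
    rw [he, Real.rpow_add hn0, Real.rpow_one]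
  -- log bound on k+1
  have hlog2 : (0 : ℝ) < Real.log 2 := Real.log_pos one_lt_two
  have hklog : (k : ℝ) * Real.log 2 ≤ Real.log n := by
    have h2k : (2 : ℕ) ^ k ≤ n := le_trans (Nat.pow_le_pow_left hb k) (Nat.pow_log_le_self b hnne)
    calc (k : ℝ) * Real.log 2 = Real.log ((2 : ℝ) ^ k) := by rw [Real.log_pow]
      _ ≤ Real.log n := Real.log_le_log (by positivity) (by exact_mod_cast h2k)
  have hlogn : Real.log 2 ≤ Real.log n := Real.log_le_log (by norm_num) (by exact_mod_cast hn)
  have hlogn0 : (0 : ℝ) ≤ Real.log n := le_trans hlog2.le hlogn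
  have hkbound : (k : ℝ) + 1 ≤ 2 * Real.log n / Real.log 2 := by
    rw [le_div_iff₀ hlog2]
    nlinarith
  -- put the goal into the form |X - nV|/n
  have hgoal_eq : X / n - V = (X - n * V) / n := by field_simp
  rw [hgoal_eq, abs_div, abs_of_pos hn0]
  -- main chain
  have hchain1 : |X - (n : ℝ) * V| / n
      ≤ ((b : ℝ) - 1) * (C₁ * (∑ j ∈ Finset.range (k + 1), β ^ j)
          + C₂ * (∑ j ∈ Finset.range (k + 1), γ ^ j)) / n := by
    apply (div_le_div_iff_of_pos_right hn0).mpr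
    exact hmain.trans (le_of_eq (by rw [Finset.sum_add_distrib, Finset.mul_sum, Finset.mul_sum]))
  have hterm1 : ((b : ℝ) - 1) * (C₁ * (∑ j ∈ Finset.range (k + 1), β ^ j)) / n
      ≤ C₁ * ((b : ℝ) - 1) / (1 - (b : ℝ) ^ (-((d : ℝ) - 1) / d)) * (n : ℝ) ^ (-(1 : ℝ) / d) := by
    have h1 : ((b : ℝ) - 1) * (C₁ * (∑ j ∈ Finset.range (k + 1), β ^ j)) / n
        ≤ ((b : ℝ) - 1) * (C₁ * (β * (n : ℝ) ^ (((d : ℝ) - 1) / d) / (β - 1))) / n := by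
      gcongr
    refine h1.trans (le_of_eq ?_)
    rw [hid1, hnpow1]
    set t : ℝ := (n : ℝ) ^ (-(1 : ℝ) / d) with ht
    have hβm : β - 1 ≠ 0 := by linarith
    field_simp
  have hterm2 : ((b : ℝ) - 1) * (C₂ * (∑ j ∈ Finset.range (k + 1), γ ^ j)) / n
      ≤ ((b : ℝ) - 1) * C₂ * (2 / Real.log 2) * (n : ℝ) ^ (-(2 : ℝ) / d) * Real.log n := by
    have h1 : ((b : ℝ) - 1) * (C₂ * (∑ j ∈ Finset.range (k + 1), γ ^ j)) / n
        ≤ ((b : ℝ) - 1) * (C₂ * (((k : ℝ) + 1) * (n : ℝ) ^ (((d : ℝ) - 2) / d))) / n := by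
      gcongr
    have h2 : ((b : ℝ) - 1) * (C₂ * (((k : ℝ) + 1) * (n : ℝ) ^ (((d : ℝ) - 2) / d))) / n
        = ((b : ℝ) - 1) * C₂ * ((k : ℝ) + 1) * (n : ℝ) ^ (-(2 : ℝ) / d) := by
      rw [hnpow2]
      set u : ℝ := (n : ℝ) ^ (-(2 : ℝ) / d) with hu
      field_simp
    have h3 : ((b : ℝ) - 1) * C₂ * ((k : ℝ) + 1) * (n : ℝ) ^ (-(2 : ℝ) / d)
        ≤ ((b : ℝ) - 1) * C₂ * (2 * Real.log n / Real.log 2) * (n : ℝ) ^ (-(2 : ℝ) / d) := by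
      have hnn : (0 : ℝ) ≤ (n : ℝ) ^ (-(2 : ℝ) / d) := by positivity
      have hbc : (0 : ℝ) ≤ ((b : ℝ) - 1) * C₂ := mul_nonneg hbm1 hC₂
      apply mul_le_mul_of_nonneg_right ?_ hnn
      exact mul_le_mul_of_nonneg_left hkbound hbc
    refine (h1.trans_eq h2).trans (h3.trans (le_of_eq ?_))
    ring
  calc |X - (n : ℝ) * V| / n
      ≤ ((b : ℝ) - 1) * (C₁ * (∑ j ∈ Finset.range (k + 1), β ^ j)
          + C₂ * (∑ j ∈ Finset.range (k + 1), γ ^ j)) / n := hchain1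
    _ = ((b : ℝ) - 1) * (C₁ * (∑ j ∈ Finset.range (k + 1), β ^ j)) / n
          + ((b : ℝ) - 1) * (C₂ * (∑ j ∈ Finset.range (k + 1), γ ^ j)) / n := by ring
    _ ≤ _ := add_le_add hterm1 hterm2
end

section
/- Let E_1,…,E_n be pairwise disjoint measurable subsets of [0,1]^d of measure 1/n each, with ∪E_i of full measure, and suppose each E_i has diameter at most 2√(d+3)·n^{−1/d}. Let x_i be independent with x_i uniform on E_i, and let f : [0,1]^d → ℝ be Lipschitz with constant M. Then Var[(1/n)Σ_i f(x_i)] ≤ 4M²(d+3)·n^{−1−2/d}. -/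
open MeasureTheory ProbabilityTheory Metric Set Bornology
open scoped ENNReal NNReal

/-!
Each `x i` lies almost surely in its cell `E i`, on which `f` oscillates by at most
`M · diam (E i) ≤ M r`, so Popoviciu's inequality gives `Var f(x i) ≤ (M r)²`. By independence
the variances of the summands add, and the average of `n` of them has variance at most
`(M r)² / n = 4 M² (d + 3) n^(-1 - 2/d)`.
-/

section Lipschitz

variable {Ω α : Type*} [MeasurableSpace Ω] {μ : Measure Ω} [PseudoMetricSpace α]
  {X : Ω → α} {s : Set α} {f : α → ℝ} {K : ℝ≥0}

theorem LipschitzOnWith.exists_ae_comp_mem_Icc [NeZero μ] (hf : LipschitzOnWith K f s)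
    (hs : IsBounded s) (hX : ∀ᵐ ω ∂μ, X ω ∈ s) :
    ∃ c, ∀ᵐ ω ∂μ, f (X ω) ∈ Icc (c - K * diam s) (c + K * diam s) := by
  obtain ⟨ω₀, hω₀⟩ := hX.exists
  refine ⟨f (X ω₀), ?_⟩
  filter_upwards [hX] with ω hω
  rw [← mem_Icc_iff_abs_le, abs_sub_comm, ← Real.dist_eq]
  exact (hf.dist_le_mul _ hω _ hω₀).trans (by gcongr; exact dist_le_diam_of_mem hs hω hω₀)

variable [MeasurableSpace α]

theorem LipschitzOnWith.memLp_comp [IsFiniteMeasure μ] [NeZero μ]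
    (hf : LipschitzOnWith K f s) (hfm : Measurable f) (hXm : AEMeasurable X μ)
    (hs : IsBounded s) (hX : ∀ᵐ ω ∂μ, X ω ∈ s) (p : ℝ≥0∞) : MemLp (fun ω ↦ f (X ω)) p μ :=
  have ⟨_, hc⟩ := hf.exists_ae_comp_mem_Icc hs hX
  memLp_of_bounded hc (hfm.comp_aemeasurable hXm).aestronglyMeasurable p

theorem LipschitzOnWith.variance_comp_le [IsProbabilityMeasure μ]
    (hf : LipschitzOnWith K f s) (hfm : Measurable f) (hXm : AEMeasurable X μ)
    (hs : IsBounded s) (hX : ∀ᵐ ω ∂μ, X ω ∈ s) :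
    variance (fun ω ↦ f (X ω)) μ ≤ (K * diam s) ^ 2 := by
  obtain ⟨c, hc⟩ := hf.exists_ae_comp_mem_Icc hs hX
  convert variance_le_sq_of_bounded hc (hfm.comp_aemeasurable hXm) using 2
  ring

end Lipschitz

theorem variance_average_le_of_iIndepFun {Ω ι : Type*} [MeasurableSpace Ω] {μ : Measure Ω}
    [Fintype ι] {Y : ι → Ω → ℝ} (hind : iIndepFun Y μ) (hY : ∀ i, MemLp (Y i) 2 μ) {v : ℝ}
    (hv : ∀ i, variance (Y i) μ ≤ v) :
    variance (fun ω ↦ (1 / (Fintype.card ι : ℝ)) * ∑ i, Y i ω) μ ≤ v / Fintype.card ι := by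
  have hsum : variance (fun ω ↦ ∑ i, Y i ω) μ = ∑ i, variance (Y i) μ := by
    rw [← Finset.sum_fn]
    exact IndepFun.variance_sum (fun i _ ↦ hY i) fun i _ j _ hij ↦ hind.indepFun hij
  rw [variance_const_mul, hsum]
  calc (1 / (Fintype.card ι : ℝ)) ^ 2 * ∑ i, variance (Y i) μ
      ≤ (1 / (Fintype.card ι : ℝ)) ^ 2 * (Fintype.card ι * v) := by
        gcongr
        exact (Finset.sum_le_sum fun i _ ↦ hv i).trans_eq (by simp)
    _ = v / Fintype.card ι := by
        rcases eq_or_ne (Fintype.card ι : ℝ) 0 with h | h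
        · simp [h]
        · field_simp

theorem ae_mem_of_map_eq_smul_restrict {Ω α : Type*} [MeasurableSpace Ω] [MeasurableSpace α]
    {μ : Measure Ω} {ν : Measure α} {X : Ω → α} {s : Set α} {c : ℝ≥0∞}
    (hXm : AEMeasurable X μ) (hs : MeasurableSet s) (hX : μ.map X = c • ν.restrict s) :
    ∀ᵐ ω ∂μ, X ω ∈ s :=
  ae_of_ae_map hXm (hX ▸ Measure.ae_smul_measure (ae_restrict_mem hs) c)

theorem EuclideanSpace.isBounded_setOf_forall_mem_Icc {ι : Type*} [Fintype ι] (a b : ℝ) :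
    IsBounded {y : EuclideanSpace ℝ ι | ∀ j, y j ∈ Icc a b} := by
  have : {y : EuclideanSpace ℝ ι | ∀ j, y j ∈ Icc a b} =
      EuclideanSpace.equiv ι ℝ ⁻¹' Icc (fun _ ↦ a) (fun _ ↦ b) := by
    ext y
    simp [Pi.le_def, forall_and]
  rw [this]
  exact (EuclideanSpace.equiv ι ℝ).antilipschitz.isBounded_preimage (isBounded_Icc _ _)

theorem Real.rpow_neg_one_div_sq_div_self {x : ℝ} (hx : 0 ≤ x) {d : ℝ} (hd : 0 ≤ d) :
    (x ^ (-1 / d)) ^ 2 / x = x ^ (-1 - 2 / d) := by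
  rw [← rpow_natCast, ← rpow_mul hx, div_eq_mul_inv, ← rpow_neg_one, ← rpow_add' hx]
  · congr 1
    push_cast
    ring
  · have : 0 ≤ 1 / d := by positivity
    rw [neg_div]
    push_cast
    linarith

theorem stratified_variance_lipschitz_general (d n : ℕ)
    {Ω : Type*} [MeasureSpace Ω] [IsProbabilityMeasure (ℙ : Measure Ω)]
    (E : Fin n → Set (EuclideanSpace ℝ (Fin d)))
    (hmeas : ∀ i, MeasurableSet (E i))
    (hsub : ∀ i, E i ⊆ {y : EuclideanSpace ℝ (Fin d) | ∀ j, y j ∈ Set.Icc (0 : ℝ) 1})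
    (hvol : ∀ i, volume (E i) = 1 / n)
    (hdiam : ∀ i, Metric.diam (E i) ≤ 2 * Real.sqrt (d + 3) * (n : ℝ) ^ (-(1 : ℝ) / d))
    (x : Fin n → Ω → EuclideanSpace ℝ (Fin d))
    (hindep : iIndepFun x ℙ)
    (hlaw : ∀ i, Measure.map (x i) ℙ = (n : ℝ≥0∞) • volume.restrict (E i))
    (f : EuclideanSpace ℝ (Fin d) → ℝ) (hfm : Measurable f) (M : ℝ)
    (hLip : ∀ u ∈ {y : EuclideanSpace ℝ (Fin d) | ∀ j, y j ∈ Set.Icc (0 : ℝ) 1},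
      ∀ v ∈ {y : EuclideanSpace ℝ (Fin d) | ∀ j, y j ∈ Set.Icc (0 : ℝ) 1},
        |f u - f v| ≤ M * ‖u - v‖) :
    variance (fun ω => (1 / (n : ℝ)) * ∑ i, f (x i ω)) ℙ
      ≤ 4 * M ^ 2 * (d + 3) * (n : ℝ) ^ (-(1 : ℝ) - 2 / d) := by
  set r := 2 * Real.sqrt (d + 3) * (n : ℝ) ^ (-(1 : ℝ) / d)
  -- `Measure.map` of a map that is not a.e.-measurable is `0`, and the law of `x i` has mass one.
  have hxm (i : Fin n) : AEMeasurable (x i) ℙ := .of_map_ne_zero <| by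
    simp [hlaw i, hvol i, i.pos.ne']
  have hxE (i : Fin n) : ∀ᵐ ω, x i ω ∈ E i :=
    ae_mem_of_map_eq_smul_restrict (hxm i) (hmeas i) (hlaw i)
  have hbdd (i : Fin n) : IsBounded (E i) :=
    (EuclideanSpace.isBounded_setOf_forall_mem_Icc 0 1).subset (hsub i)
  have hfE (i : Fin n) : LipschitzOnWith ‖M‖₊ f (E i) := .of_dist_le_mul fun u hu v hv ↦ by
    rw [Real.dist_eq, dist_eq_norm, coe_nnnorm]
    exact (hLip u (hsub i hu) v (hsub i hv)).trans (by gcongr; exact Real.le_norm_self M)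
  have hvar (i : Fin n) : variance (fun ω ↦ f (x i ω)) ℙ ≤ (‖M‖ * r) ^ 2 :=
    ((hfE i).variance_comp_le hfm (hxm i) (hbdd i) (hxE i)).trans <| by
      rw [coe_nnnorm]; gcongr; exact hdiam i
  have := variance_average_le_of_iIndepFun (hindep.comp (fun _ ↦ f) fun _ ↦ hfm)
    (fun i ↦ (hfE i).memLp_comp hfm (hxm i) (hbdd i) (hxE i) 2) hvar
  rw [Fintype.card_fin] at this
  refine this.trans_eq ?_
  calc (‖M‖ * r) ^ 2 / n
        = 4 * M ^ 2 * (d + 3) * (((n : ℝ) ^ (-1 / (d : ℝ))) ^ 2 / n) := by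
        rw [mul_pow, mul_pow, mul_pow, Real.norm_eq_abs, sq_abs, Real.sq_sqrt (by positivity)]
        ring
    _ = 4 * M ^ 2 * (d + 3) * (n : ℝ) ^ (-(1 : ℝ) - 2 / d) := by
        rw [Real.rpow_neg_one_div_sq_div_self n.cast_nonneg d.cast_nonneg]

/-- Variance bound for the stratified estimator of a Lipschitz integrand along
cells of diameter at most `2√(d+3)·n^{-1/d}`. -/
theorem stratified_variance_lipschitz (d n : ℕ) (hd : 1 ≤ d) (hn : 0 < n)
    {Ω : Type*} [MeasureSpace Ω] [IsProbabilityMeasure (ℙ : Measure Ω)]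
    (E : Fin n → Set (EuclideanSpace ℝ (Fin d)))
    (hmeas : ∀ i, MeasurableSet (E i))
    (hsub : ∀ i, E i ⊆ {y : EuclideanSpace ℝ (Fin d) | ∀ j, y j ∈ Set.Icc (0 : ℝ) 1})
    (hdisj : Pairwise (Function.onFun Disjoint E))
    (hvol : ∀ i, volume (E i) = 1 / n)
    (hcover : volume ({y : EuclideanSpace ℝ (Fin d) | ∀ j, y j ∈ Set.Icc (0 : ℝ) 1}
      \ ⋃ i, E i) = 0)
    (hdiam : ∀ i, Metric.diam (E i) ≤ 2 * Real.sqrt (d + 3) * (n : ℝ) ^ (-(1 : ℝ) / d))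
    (x : Fin n → Ω → EuclideanSpace ℝ (Fin d))
    (hindep : iIndepFun x ℙ)
    (hlaw : ∀ i, Measure.map (x i) ℙ = (n : ℝ≥0∞) • volume.restrict (E i))
    (f : EuclideanSpace ℝ (Fin d) → ℝ) (hfm : Measurable f) (M : ℝ)
    (hLip : ∀ u ∈ {y : EuclideanSpace ℝ (Fin d) | ∀ j, y j ∈ Set.Icc (0 : ℝ) 1},
      ∀ v ∈ {y : EuclideanSpace ℝ (Fin d) | ∀ j, y j ∈ Set.Icc (0 : ℝ) 1},
        |f u - f v| ≤ M * ‖u - v‖) :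
    variance (fun ω => (1 / (n : ℝ)) * ∑ i, f (x i ω)) ℙ
      ≤ 4 * M ^ 2 * (d + 3) * (n : ℝ) ^ (-(1 : ℝ) - 2 / d) :=
  stratified_variance_lipschitz_general d n E hmeas hsub hvol hdiam x hindep hlaw f hfm M hLip
end

section
/- Let b ≥ 2, 0 < α < 1, and k ≥ 0 with b^k ≤ n. Then Σ_{j=0}^k b^{j(1−α)/2} ≤ n^{(1−α)/2}/(1 − b^{(α−1)/2}). Consequently, if μ̂ = (1/n)Σ_{j=0}^k Σ_{ℓ=1}^{a_j} b^j μ̂_{jℓ} with digits a_j ∈ {0,…,b−1}, n = Σ_j a_j b^j, and Var(μ̂_{jℓ}) ≤ C·b^{−j(1+α)} for all j, ℓ, then Var(μ̂) ≤ C(b−1)²/(1−b^{(α−1)/2})² · n^{−1−α}. -/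
/-!
The standard deviation is a seminorm on square-integrable random variables (it is the `L²` norm
of the centred variable), so by Minkowski's inequality the standard deviation of the digit
estimator is at most `∑_j a_j b^j √(C b^{-j(1+α)}) ≤ (b - 1) √C ∑_{j ≤ k} r^j` with
`r = b^{(1-α)/2} > 1`, whatever the correlations. The geometric sum is dominated by its top
term: `∑_{j ≤ k} r^j ≤ r^k / (1 - r⁻¹)`, and `r^k = (b^k)^{(1-α)/2} ≤ n^{(1-α)/2}`. Squaring and
dividing by `n²` gives the rate `n^{-1-α}`.
-/

open MeasureTheory ProbabilityTheory Finset

lemma geom_sum_range_succ_le_pow_div {r : ℝ} (hr : 1 < r) (k : ℕ) :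
    ∑ j ∈ range (k + 1), r ^ j ≤ r ^ k / (1 - r⁻¹) := by
  have hr1 : 0 < r - 1 := sub_pos.mpr hr
  calc ∑ j ∈ range (k + 1), r ^ j = (r ^ (k + 1) - 1) / (r - 1) := geom_sum_eq hr.ne' _
    _ ≤ r ^ (k + 1) / (r - 1) := by gcongr; linarith
    _ = r ^ k / (1 - r⁻¹) := by field_simp; ring

lemma geom_sum_rpow_le {x y t : ℝ} (hx : 1 < x) (ht : 0 < t) {k : ℕ} (hxy : x ^ k ≤ y) :
    ∑ j ∈ range (k + 1), (x ^ t) ^ j ≤ y ^ t / (1 - x ^ (-t)) := by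
  have hx0 : 0 ≤ x := zero_le_one.trans hx.le
  have hxt : 1 < x ^ t := Real.one_lt_rpow hx ht
  rw [Real.rpow_neg hx0]
  calc ∑ j ∈ range (k + 1), (x ^ t) ^ j ≤ (x ^ t) ^ k / (1 - (x ^ t)⁻¹) :=
        geom_sum_range_succ_le_pow_div hxt k
    _ ≤ y ^ t / (1 - (x ^ t)⁻¹) := by
        have : 0 < 1 - (x ^ t)⁻¹ := sub_pos.mpr (inv_lt_one_of_one_lt₀ hxt)
        rw [← Real.rpow_mul_natCast hx0, mul_comm, Real.rpow_natCast_mul hx0]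
        gcongr

lemma pow_mul_sqrt_mul_rpow {x : ℝ} (hx : 0 < x) (C α : ℝ) (j : ℕ) :
    x ^ j * √(C * x ^ (-(j : ℝ) * (1 + α))) = √C * (x ^ ((1 - α) / 2)) ^ j := by
  have hsqrt : √(x ^ (-(j : ℝ) * (1 + α))) = x ^ (-(j : ℝ) * (1 + α) / 2) := by
    rw [Real.sqrt_eq_rpow, ← Real.rpow_mul hx.le]
    ring_nf
  rw [Real.sqrt_mul' C (by positivity), hsqrt, ← Real.rpow_mul_natCast hx.le,
    ← Real.rpow_natCast x j, mul_left_comm, ← Real.rpow_add hx]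
  ring_nf

lemma inv_sq_mul_sq_mul_rpow {n : ℝ} (hn : 0 < n) (c α : ℝ) :
    (1 / n) ^ 2 * (c * n ^ ((1 - α) / 2)) ^ 2 = c ^ 2 * n ^ (-1 - α) := by
  have hsq : (n ^ ((1 - α) / 2)) ^ 2 = n ^ (1 - α) := by
    rw [← Real.rpow_mul_natCast hn.le]
    ring_nf
  have hshift : n ^ (-1 - α) = n ^ (1 - α) / n ^ 2 := by
    rw [← Real.rpow_natCast n 2, ← Real.rpow_sub hn]
    ring_nf
  rw [mul_pow, hsq, hshift]
  field_simp

namespace ProbabilityTheory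

variable {Ω : Type*} [MeasurableSpace Ω] {μ : Measure Ω}

lemma sqrt_variance_eq_toReal_eLpNorm (X : Ω → ℝ) (μ : Measure Ω) :
    √(variance X μ) = (eLpNorm (fun ω => X ω - μ[X]) 2 μ).toReal := by
  have h : evariance X μ = eLpNorm (fun ω => X ω - μ[X]) 2 μ ^ 2 := by
    rw [eLpNorm_eq_lintegral_rpow_enorm_toReal two_ne_zero ENNReal.ofNat_ne_top, evariance,
      ← ENNReal.rpow_natCast _ 2, ← ENNReal.rpow_mul]
    norm_num
  rw [variance, h, ENNReal.toReal_pow, Real.sqrt_sq ENNReal.toReal_nonneg]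

lemma sqrt_variance_const_mul (c : ℝ) (X : Ω → ℝ) (μ : Measure Ω) :
    √(variance (fun ω => c * X ω) μ) = |c| * √(variance X μ) := by
  rw [variance_const_mul, Real.sqrt_mul (sq_nonneg c), Real.sqrt_sq_eq_abs]

lemma sqrt_variance_sum_le [IsFiniteMeasure μ] {ι : Type*} (s : Finset ι) {X : ι → Ω → ℝ}
    (hX : ∀ i ∈ s, MemLp (X i) 2 μ) :
    √(variance (fun ω => ∑ i ∈ s, X i ω) μ) ≤ ∑ i ∈ s, √(variance (X i) μ) := by
  set Z : ι → Ω → ℝ := fun i ω => X i ω - μ[X i]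
  have hZ : ∀ i ∈ s, MemLp (Z i) 2 μ := fun i hi => (hX i hi).sub (memLp_const _)
  have hcentred : (fun ω => ∑ i ∈ s, X i ω) - (fun _ => μ[fun ω => ∑ i ∈ s, X i ω])
      = ∑ i ∈ s, Z i := by
    ext ω
    simp [Z, integral_finsetSum s fun i hi => (hX i hi).integrable one_le_two]
  have hfin : ∀ i ∈ s, eLpNorm (Z i) 2 μ ≠ ⊤ := fun i hi => (hZ i hi).eLpNorm_ne_top
  calc √(variance (fun ω => ∑ i ∈ s, X i ω) μ) = (eLpNorm (∑ i ∈ s, Z i) 2 μ).toReal := by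
        rw [sqrt_variance_eq_toReal_eLpNorm, ← hcentred]; rfl
    _ ≤ (∑ i ∈ s, eLpNorm (Z i) 2 μ).toReal :=
        ENNReal.toReal_mono (ENNReal.sum_ne_top.mpr hfin)
          (eLpNorm_sum_le (fun i hi => (hZ i hi).aestronglyMeasurable) one_le_two)
    _ = ∑ i ∈ s, √(variance (X i) μ) := by
        rw [ENNReal.toReal_sum hfin]
        exact sum_congr rfl fun i _ => (sqrt_variance_eq_toReal_eLpNorm (X i) μ).symm

lemma sqrt_variance_sum_le_of_sqrt_variance_le [IsFiniteMeasure μ] {ι : Type*} (s : Finset ι)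
    {X : ι → Ω → ℝ} {σ : ι → ℝ} (hX : ∀ i ∈ s, MemLp (X i) 2 μ)
    (hσ : ∀ i ∈ s, √(variance (X i) μ) ≤ σ i) :
    √(variance (fun ω => ∑ i ∈ s, X i ω) μ) ≤ ∑ i ∈ s, σ i :=
  (sqrt_variance_sum_le s hX).trans (sum_le_sum hσ)

lemma sqrt_variance_digit_sum_le [IsFiniteMeasure μ] {b : ℕ} (hb : 1 ≤ b) {α C : ℝ} {k : ℕ}
    {a : ℕ → ℕ} (ha : ∀ j, j ≤ k → a j ≤ b - 1) {Y : ℕ → ℕ → Ω → ℝ}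
    (hY : ∀ j ℓ, MemLp (Y j ℓ) 2 μ)
    (hvar : ∀ j ℓ, j ≤ k → ℓ < a j → variance (Y j ℓ) μ ≤ C * (b : ℝ) ^ (-(j : ℝ) * (1 + α))) :
    √(variance (fun ω => ∑ j ∈ range (k + 1), ∑ ℓ ∈ range (a j), (b : ℝ) ^ j * Y j ℓ ω) μ)
      ≤ ((b : ℝ) - 1) * √C * ∑ j ∈ range (k + 1), ((b : ℝ) ^ ((1 - α) / 2)) ^ j := by
  have hb0 : (0 : ℝ) < b := by exact_mod_cast hb
  have hterm : ∀ j ℓ, j ≤ k → ℓ < a j →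
      √(variance (fun ω => (b : ℝ) ^ j * Y j ℓ ω) μ) ≤ √C * ((b : ℝ) ^ ((1 - α) / 2)) ^ j := by
    intro j ℓ hj hℓ
    rw [sqrt_variance_const_mul, abs_of_pos (by positivity), ← pow_mul_sqrt_mul_rpow hb0]
    gcongr
    exact hvar j ℓ hj hℓ
  have hdigit : ∀ j, j ≤ k → (a j : ℝ) ≤ (b : ℝ) - 1 := fun j hj => by
    have := ha j hj
    rw [← Nat.cast_one, ← Nat.cast_sub hb]
    exact_mod_cast this
  rw [mul_sum]
  refine sqrt_variance_sum_le_of_sqrt_variance_le _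
    (fun j _ => memLp_finsetSum _ fun ℓ _ => (hY j ℓ).const_mul _) fun j hj => ?_
  have hj : j ≤ k := Nat.lt_succ_iff.mp (mem_range.mp hj)
  calc √(variance (fun ω => ∑ ℓ ∈ range (a j), (b : ℝ) ^ j * Y j ℓ ω) μ)
      ≤ ∑ ℓ ∈ range (a j), √C * ((b : ℝ) ^ ((1 - α) / 2)) ^ j :=
        sqrt_variance_sum_le_of_sqrt_variance_le _ (fun ℓ _ => (hY j ℓ).const_mul _)
          fun ℓ hℓ => hterm j ℓ hj (mem_range.mp hℓ)
    _ ≤ ((b : ℝ) - 1) * √C * ((b : ℝ) ^ ((1 - α) / 2)) ^ j := by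
        rw [sum_const, card_range, nsmul_eq_mul, mul_assoc]
        gcongr
        exact hdigit j hj

end ProbabilityTheory

theorem variance_rate_extension_general (b : ℕ) (hb : 2 ≤ b) (α : ℝ) (hα1 : α < 1)
    (k : ℕ) (n : ℕ) (hbk : (b : ℝ) ^ k ≤ (n : ℝ)) :
    ((∑ j ∈ Finset.range (k + 1), ((b : ℝ) ^ (((1 : ℝ) - α) / 2)) ^ j)
      ≤ (n : ℝ) ^ (((1 : ℝ) - α) / 2) / (1 - (b : ℝ) ^ ((α - 1) / 2))) ∧
    (∀ {Ω : Type} (_ : MeasureSpace Ω), IsProbabilityMeasure (ℙ : Measure Ω) →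
      ∀ (a : ℕ → ℕ), (∀ j, j ≤ k → a j ≤ b - 1) → 1 ≤ a k →
        (n : ℕ) = ∑ j ∈ Finset.range (k + 1), a j * b ^ j →
      ∀ (Y : ℕ → ℕ → Ω → ℝ), (∀ j ℓ, MemLp (Y j ℓ) 2 ℙ) →
      ∀ C : ℝ, 0 ≤ C →
        (∀ j ℓ, j ≤ k → ℓ < a j →
          variance (Y j ℓ) ℙ ≤ C * (b : ℝ) ^ (-(j : ℝ) * (1 + α))) →
        variance (fun ω => (1 / (n : ℝ)) * ∑ j ∈ Finset.range (k + 1),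
            ∑ ℓ ∈ Finset.range (a j), (b : ℝ) ^ j * Y j ℓ ω) ℙ
          ≤ C * ((b : ℝ) - 1) ^ 2 / (1 - (b : ℝ) ^ ((α - 1) / 2)) ^ 2
            * (n : ℝ) ^ (-(1 : ℝ) - α)) := by
  have hb1 : (1 : ℝ) < b := by exact_mod_cast hb
  rw [show (α - 1) / 2 = -((1 - α) / 2) by ring]
  have hgeom := geom_sum_rpow_le hb1 (by linarith : 0 < (1 - α) / 2) hbk
  refine ⟨hgeom, fun _ _ a ha _ _ Y hY C hC hvar => ?_⟩
  have hn : (0 : ℝ) < n := (pow_pos (one_pos.trans hb1) k).trans_le hbk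
  set d := 1 - (b : ℝ) ^ (-((1 - α) / 2))
  have hsd : √(variance (fun ω => ∑ j ∈ range (k + 1), ∑ ℓ ∈ range (a j), (b : ℝ) ^ j * Y j ℓ ω) ℙ)
      ≤ ((b : ℝ) - 1) * √C / d * (n : ℝ) ^ ((1 - α) / 2) := by
    calc _ ≤ ((b : ℝ) - 1) * √C * ∑ j ∈ range (k + 1), ((b : ℝ) ^ ((1 - α) / 2)) ^ j :=
          sqrt_variance_digit_sum_le (by omega) ha hY hvar
      _ ≤ ((b : ℝ) - 1) * √C * ((n : ℝ) ^ ((1 - α) / 2) / d) := by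
          gcongr
      _ = _ := by ring
  rw [variance_const_mul]
  calc _ ≤ (1 / (n : ℝ)) ^ 2 * (((b : ℝ) - 1) * √C / d * (n : ℝ) ^ ((1 - α) / 2)) ^ 2 := by
        gcongr
        exact (Real.sqrt_le_iff.mp hsd).2
    _ = _ := by
        rw [inv_sq_mul_sq_mul_rpow hn, div_pow, mul_pow, Real.sq_sqrt hC]
        ring

/-- Geometric-sum bound and variance-rate extension from sample sizes `b^m`
to arbitrary `n` via the base-`b` digit decomposition, for rate `0 < α < 1`. -/
theorem variance_rate_extension (b : ℕ) (hb : 2 ≤ b) (α : ℝ) (hα : 0 < α) (hα1 : α < 1)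
    (k : ℕ) (n : ℕ) (hbk : (b : ℝ) ^ k ≤ (n : ℝ)) :
    ((∑ j ∈ Finset.range (k + 1), ((b : ℝ) ^ (((1 : ℝ) - α) / 2)) ^ j)
      ≤ (n : ℝ) ^ (((1 : ℝ) - α) / 2) / (1 - (b : ℝ) ^ ((α - 1) / 2))) ∧
    (∀ {Ω : Type} (_ : MeasureSpace Ω), IsProbabilityMeasure (ℙ : Measure Ω) →
      ∀ (a : ℕ → ℕ), (∀ j, j ≤ k → a j ≤ b - 1) → 1 ≤ a k →
        (n : ℕ) = ∑ j ∈ Finset.range (k + 1), a j * b ^ j →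
      ∀ (Y : ℕ → ℕ → Ω → ℝ), (∀ j ℓ, MemLp (Y j ℓ) 2 ℙ) →
      ∀ C : ℝ, 0 ≤ C →
        (∀ j ℓ, j ≤ k → ℓ < a j →
          variance (Y j ℓ) ℙ ≤ C * (b : ℝ) ^ (-(j : ℝ) * (1 + α))) →
        variance (fun ω => (1 / (n : ℝ)) * ∑ j ∈ Finset.range (k + 1),
            ∑ ℓ ∈ Finset.range (a j), (b : ℝ) ^ j * Y j ℓ ω) ℙ
          ≤ C * ((b : ℝ) - 1) ^ 2 / (1 - (b : ℝ) ^ ((α - 1) / 2)) ^ 2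
            * (n : ℝ) ^ (-(1 : ℝ) - α)) :=
  variance_rate_extension_general b hb α hα1 k n hbk
end

section
/- Under the hypotheses of the discontinuous-integrand stratified estimator (E_i disjoint, measure 1/n, diameter ≤ 2√(d+3)n^{−1/d}, f = g·1_Ω with g Lipschitz and bounded by D, ∂Ω of finite Minkowski content), let T_bdy be the set of boundary indices and set n₀ = ⌈n/|T_bdy|⌉. Define the adaptive estimator μ̂ = (1/(n·n₀))Σ_{j=1}^{n₀}Σ_{i∈T_bdy} f(x_i^{(j)}) + (1/n)Σ_{i∉T_bdy} f(x_i), with all x_i^{(j)}, x_i independent and x_i^{(j)}, x_i uniform on E_i. Then μ̂ is unbiased and Var[μ̂] = O(n^{−1−2/d}). -/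
/-!
Every sample is uniform on its stratum `E i`, so `f (x i)` has mean `n ∫_{E i} f`; with the
weights `1/n` and `1/(n n₀)` the estimator is unbiased, and by independence its variance is the
weighted sum of the stratum variances. On a stratum that does not meet `∂S`, `f = S.indicator g`
is `g` or `0` there, hence varies by at most `|M| δ` with `δ = 2 √(d+3) n^{-1/d}`; on a boundary
stratum `f` is only bounded by `D`, but these strata carry the weight `1/(n n₀)` with
`n₀ ≥ n/|T|`, so together they contribute at most `(|T|/n)² D² / n`. A boundary stratum lies in
the `2δ`-thickening of `∂S`, whose volume is `O(δ)` by the Minkowski content bound, so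
`|T|/n = O(δ)`. Both parts are thus `O(δ² / n) = O(n^{-1-2/d})`.
-/

open MeasureTheory ProbabilityTheory Filter Metric
open scoped ENNReal

theorem IsPreconnected.inter_frontier_nonempty {X : Type*} [TopologicalSpace X] {s t : Set X}
    (ht : IsPreconnected t) (hts : (t ∩ s).Nonempty) (hts' : (t \ s).Nonempty) :
    (t ∩ frontier s).Nonempty := by
  by_contra h
  have hcover : t ⊆ interior s ∪ interior sᶜ := fun z hz => by
    rw [interior_compl]
    by_cases hzs : z ∈ closure s
    · exact Or.inl (by_contra fun hzi => h ⟨z, hz, hzs, hzi⟩)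
    · exact Or.inr hzs
  have hint : ∀ z ∈ t, z ∈ s → z ∈ interior s := fun z hz hzs =>
    (hcover hz).resolve_right fun hzc => interior_subset hzc hzs
  have hext : ∀ z ∈ t, z ∉ s → z ∈ interior sᶜ := fun z hz hzs =>
    (hcover hz).resolve_left fun hzi => hzs (interior_subset hzi)
  obtain ⟨a, hat, has⟩ := hts
  obtain ⟨b, hbt, hbs⟩ := hts'
  obtain ⟨z, -, hzs, hzc⟩ := ht _ _ isOpen_interior isOpen_interior hcover
    ⟨a, hat, hint a hat has⟩ ⟨b, hbt, hext b hbt hbs⟩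
  exact interior_subset hzc (interior_subset hzs)

/-- The segment from a point of `t ∩ s` to a point of `t \ s` crosses `frontier s`. -/
theorem Bornology.IsBounded.subset_cthickening_frontier {V : Type*} [NormedAddCommGroup V]
    [NormedSpace ℝ V] {s t : Set V} (ht : Bornology.IsBounded t) (hts : (t ∩ s).Nonempty)
    (hts' : ¬ t ⊆ s) : t ⊆ Metric.cthickening (2 * diam t) (frontier s) := by
  obtain ⟨a, hat, has⟩ := hts
  obtain ⟨b, hbt, hbs⟩ := Set.not_subset.1 hts'
  obtain ⟨p, hp, hps⟩ := (convex_segment a b).isPreconnected.inter_frontier_nonempty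
    ⟨a, left_mem_segment ℝ a b, has⟩ ⟨b, right_mem_segment ℝ a b, hbs⟩
  intro e he
  refine mem_cthickening_of_dist_le e p _ _ hps ?_
  have hap : dist a p ≤ dist a b := by
    linarith [dist_add_dist_of_mem_segment hp, dist_nonneg (x := p) (y := b)]
  linarith [dist_triangle e a p, dist_le_diam_of_mem ht he hat, dist_le_diam_of_mem ht hat hbt]

theorem exists_abs_indicator_sub_le_of_not_boundary {V : Type*} [SeminormedAddCommGroup V]
    {s E : Set V} {g : V → ℝ} {M : ℝ} (hg : ∀ u ∈ E, ∀ v ∈ E, |g u - g v| ≤ M * ‖u - v‖)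
    (hE : Bornology.IsBounded E) (h : ¬ ((E ∩ s).Nonempty ∧ ¬ E ⊆ s)) :
    ∃ c, ∀ z ∈ E, |s.indicator g z - c| ≤ |M| * diam E := by
  by_cases hEs : (E ∩ s).Nonempty
  · obtain ⟨z₀, hz₀, hz₀s⟩ := hEs
    have hsub : E ⊆ s := not_not.1 fun hEs' => h ⟨⟨z₀, hz₀, hz₀s⟩, hEs'⟩
    refine ⟨g z₀, fun z hz => ?_⟩
    rw [Set.indicator_of_mem (hsub hz)]
    calc |g z - g z₀| ≤ M * ‖z - z₀‖ := hg z hz z₀ hz₀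
      _ ≤ |M| * ‖z - z₀‖ := by gcongr; exact le_abs_self M
      _ ≤ |M| * diam E := by rw [← dist_eq_norm]; gcongr; exact dist_le_diam_of_mem hE hz hz₀
  · refine ⟨0, fun z hz => ?_⟩
    rw [Set.indicator_of_notMem fun hzs => hEs ⟨z, hz, hzs⟩, sub_zero, abs_zero]
    positivity

theorem isBounded_unitCube_s19 (d : ℕ) :
    Bornology.IsBounded {y : EuclideanSpace ℝ (Fin d) | ∀ j, y j ∈ Set.Icc (0 : ℝ) 1} := by
  refine ((PiLp.antilipschitzWith_ofLp 2 fun _ : Fin d => ℝ).isBounded_preimage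
    (Metric.isBounded_Icc (0 : Fin d → ℝ) 1)).subset fun y hy => ?_
  simpa [Pi.le_def, forall_and] using hy

/-- The limit only controls small `ε`; the `min 1` absorbs the large ones. -/
theorem exists_min_one_le_mul_of_tendsto_div {φ : ℝ → ℝ} {L : ℝ}
    (h : Tendsto (fun ε => φ ε / (2 * ε)) (nhdsWithin 0 (Set.Ioi 0)) (nhds L)) :
    ∃ K, ∀ ε > 0, min 1 (φ ε) ≤ K * ε := by
  obtain ⟨ε₀, hε₀, hφ⟩ :=
    mem_nhdsGT_iff_exists_Ioo_subset.1 (h.eventually (gt_mem_nhds (lt_add_one L)))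
  refine ⟨max (2 * (L + 1)) ε₀⁻¹, fun ε hε => ?_⟩
  rcases lt_or_ge ε ε₀ with hεε₀ | hεε₀
  · have hlt : φ ε / (2 * ε) < L + 1 := hφ ⟨hε, hεε₀⟩
    rw [div_lt_iff₀ (by positivity)] at hlt
    calc min 1 (φ ε) ≤ φ ε := min_le_right _ _
      _ ≤ 2 * (L + 1) * ε := by linarith
      _ ≤ _ := by gcongr; exact le_max_left _ _
  · calc min 1 (φ ε) ≤ 1 := min_le_left _ _
      _ ≤ ε₀⁻¹ * ε := by rw [inv_mul_eq_div, one_le_div hε₀]; exact hεε₀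
      _ ≤ _ := by gcongr; exact le_max_right _ _

theorem card_mul_le_measure_of_subset {V ι : Type*} [MeasurableSpace V] {μ : Measure V}
    {E : ι → Set V} {T : Finset ι} (hEm : ∀ i ∈ T, MeasurableSet (E i))
    (hdisj : (T : Set ι).PairwiseDisjoint E) {m : ℝ≥0∞} (hμ : ∀ i ∈ T, μ (E i) = m)
    {U : Set V} (hTU : ∀ i ∈ T, E i ⊆ U) : T.card * m ≤ μ U :=
  calc T.card * m = ∑ i ∈ T, μ (E i) := by rw [Finset.sum_congr rfl hμ]; simp
    _ = μ (⋃ i ∈ T, E i) := (measure_biUnion_finset hdisj hEm).symm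
    _ ≤ μ U := measure_mono (Set.iUnion₂_subset hTU)

theorem card_boundary_div_le {V : Type*} [NormedAddCommGroup V] [NormedSpace ℝ V]
    [MeasurableSpace V] {μ : Measure V} {n : ℕ} {E : Fin n → Set V}
    (hEm : ∀ i, MeasurableSet (E i)) (hdisj : Pairwise (Function.onFun Disjoint E))
    (hμ : ∀ i, μ (E i) = 1 / n) {δ : ℝ} (hEb : ∀ i, Bornology.IsBounded (E i))
    (hdiam : ∀ i, diam (E i) ≤ δ) {s : Set V} (hfin : μ (cthickening (2 * δ) (frontier s)) ≠ ∞)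
    {T : Finset (Fin n)} (hT : ∀ i ∈ T, (E i ∩ s).Nonempty ∧ ¬ E i ⊆ s) :
    (T.card : ℝ) / n ≤ min 1 (μ (cthickening (2 * δ) (frontier s))).toReal := by
  refine le_min (div_le_one_of_le₀ (by exact_mod_cast card_finset_fin_le T) (by positivity)) ?_
  have hsub : ∀ i ∈ T, E i ⊆ cthickening (2 * δ) (frontier s) := fun i hi =>
    ((hEb i).subset_cthickening_frontier (hT i hi).1 (hT i hi).2).trans
      (cthickening_mono (by linarith [hdiam i]) _)
  have := ENNReal.toReal_mono hfin <| card_mul_le_measure_of_subset (fun i _ => hEm i)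
    (hdisj.set_pairwise _) (fun i _ => hμ i) hsub
  simpa [div_eq_mul_inv] using this

theorem setIntegral_eq_sum_of_ae_cover {X ι F : Type*} [MeasurableSpace X] [Fintype ι]
    [NormedAddCommGroup F] [NormedSpace ℝ F] {μ : Measure X} {s : ι → Set X} {Q : Set X}
    {f : X → F} (hs : ∀ i, MeasurableSet (s i)) (hdisj : Pairwise (Function.onFun Disjoint s))
    (hsQ : ∀ i, s i ⊆ Q) (hcov : μ (Q \ ⋃ i, s i) = 0) (hf : ∀ i, IntegrableOn f (s i) μ) :
    ∫ x in Q, f x ∂μ = ∑ i, ∫ x in s i, f x ∂μ := by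
  rw [← integral_iUnion_fintype hs hdisj hf]
  refine setIntegral_congr_set (ae_eq_set.2 ⟨hcov, ?_⟩)
  rw [Set.sdiff_eq_empty.2 (Set.iUnion_subset hsQ), measure_empty]

namespace MeasureTheory.pdf

variable {Ω V : Type*} [MeasurableSpace Ω] [MeasurableSpace V] {P : Measure Ω} {μ : Measure V}
  {X : Ω → V} {s : Set V}

theorem isUniform_of_map_eq_smul_restrict {n : ℕ} (hs : μ s = 1 / n)
    (hX : Measure.map X P = (n : ℝ≥0∞) • μ.restrict s) : IsUniform X s P μ := by
  rwa [IsUniform, ProbabilityTheory.cond, hs, one_div, inv_inv]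

namespace IsUniform

theorem ae_mem (hns : μ s ≠ 0) (hnt : μ s ≠ ∞) (hu : IsUniform X s P μ)
    (hs : MeasurableSet s) : ∀ᵐ ω ∂P, X ω ∈ s := by
  have := hu.measure_preimage hns hnt hs.compl
  rw [Set.inter_compl_self, measure_empty, ENNReal.zero_div] at this
  exact measure_mono_null (fun ω hω => hω) this

theorem aestronglyMeasurable_comp (hns : μ s ≠ 0) (hnt : μ s ≠ ∞) (hu : IsUniform X s P μ)
    {f : V → ℝ} (hf : AEStronglyMeasurable f μ) : AEStronglyMeasurable (fun ω => f (X ω)) P :=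
  (hf.mono_ac hu.absolutelyContinuous).comp_aemeasurable (hu.aemeasurable hns hnt)

theorem integral_comp (hns : μ s ≠ 0) (hnt : μ s ≠ ∞) (hu : IsUniform X s P μ)
    {f : V → ℝ} (hf : AEStronglyMeasurable f μ) :
    ∫ ω, f (X ω) ∂P = (μ s).toReal⁻¹ * ∫ x in s, f x ∂μ := by
  rw [← integral_map (hu.aemeasurable hns hnt) (hf.mono_ac hu.absolutelyContinuous), hu,
    ProbabilityTheory.cond, integral_smul_measure, ENNReal.toReal_inv, smul_eq_mul]

theorem memLp_comp (hns : μ s ≠ 0) (hnt : μ s ≠ ∞) (hu : IsUniform X s P μ)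
    (hs : MeasurableSet s) {f : V → ℝ} (hf : AEStronglyMeasurable f μ) {D : ℝ}
    (hfD : ∀ x ∈ s, |f x| ≤ D) (p : ℝ≥0∞) : MemLp (fun ω => f (X ω)) p P := by
  have := hu.isProbabilityMeasure hns hnt
  exact .of_bound (hu.aestronglyMeasurable_comp hns hnt hf) D <|
    (hu.ae_mem hns hnt hs).mono fun ω hω => hfD _ hω

theorem variance_comp_le (hns : μ s ≠ 0) (hnt : μ s ≠ ∞) (hu : IsUniform X s P μ)
    (hs : MeasurableSet s) {f : V → ℝ} (hf : AEStronglyMeasurable f μ)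
    {c B : ℝ} (hfc : ∀ x ∈ s, |f x - c| ≤ B) : variance (fun ω => f (X ω)) P ≤ B ^ 2 := by
  have := hu.isProbabilityMeasure hns hnt
  have hIcc : ∀ᵐ ω ∂P, f (X ω) ∈ Set.Icc (c - B) (c + B) :=
    (hu.ae_mem hns hnt hs).mono fun ω hω => by
      have := abs_le.1 (hfc _ hω)
      exact ⟨by linarith [this.1], by linarith [this.2]⟩
  convert variance_le_sq_of_bounded hIcc
    (hu.aestronglyMeasurable_comp hns hnt hf).aemeasurable using 2
  ring

end IsUniform

end MeasureTheory.pdf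

theorem ProbabilityTheory.iIndepFun.variance_sum_mul_comp {Ω V ι : Type*} [MeasurableSpace Ω]
    [MeasurableSpace V] {P : Measure Ω} {Z : ι → Ω → V} (hZ : iIndepFun Z P) {f : V → ℝ}
    (hf : Measurable f) (c : ι → ℝ) {s : Finset ι}
    (hs : ∀ k ∈ s, MemLp (fun ω => f (Z k ω)) 2 P) :
    variance (fun ω => ∑ k ∈ s, c k * f (Z k ω)) P
      = ∑ k ∈ s, c k ^ 2 * variance (fun ω => f (Z k ω)) P := by
  have hsum : (fun ω => ∑ k ∈ s, c k * f (Z k ω)) = ∑ k ∈ s, fun ω => c k * f (Z k ω) := by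
    ext ω; simp
  rw [hsum, IndepFun.variance_sum (fun k hk => (hs k hk).const_mul (c k))
    fun k _ l _ hkl => (hZ.indepFun hkl).comp (hf.const_mul (c k)) (hf.const_mul (c l))]
  simp only [variance_const_mul]

theorem ceil_div_ne_zero {n t : ℕ} (hn : 0 < n) (ht : 0 < t) : ⌈(n : ℝ) / t⌉₊ ≠ 0 :=
  (Nat.ceil_pos.2 (by positivity)).ne'

theorem div_sq_mul_ceil_div_le {n t : ℕ} (hn : 0 < n) :
    (t : ℝ) / (n ^ 2 * ⌈(n : ℝ) / t⌉₊) ≤ ((t : ℝ) / n) ^ 2 / n := by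
  rcases Nat.eq_zero_or_pos t with rfl | ht
  · simp
  have hceil : (n : ℝ) / t ≤ ⌈(n : ℝ) / t⌉₊ := Nat.le_ceil _
  calc (t : ℝ) / (n ^ 2 * ⌈(n : ℝ) / t⌉₊) ≤ t / (n ^ 2 * (n / t)) := by gcongr
    _ = ((t : ℝ) / n) ^ 2 / n := by field_simp

noncomputable def adaptiveEstimator {Ω V : Type*} (f : V → ℝ) (n n₀ : ℕ) (T : Finset (Fin n))
    (x : Fin n → Ω → V) (y : ℕ → Fin n → Ω → V) (ω : Ω) : ℝ :=
  (1 / ((n : ℝ) * n₀)) * ∑ j ∈ Finset.range n₀, ∑ i ∈ T, f (y j i ω)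
    + (1 / (n : ℝ)) * ∑ i ∈ Tᶜ, f (x i ω)

theorem adaptiveEstimator_eq_sum {Ω V : Type*} (f : V → ℝ) (n n₀ : ℕ) (T : Finset (Fin n))
    (x : Fin n → Ω → V) (y : ℕ → Fin n → Ω → V) :
    adaptiveEstimator f n n₀ T x y = fun ω => ∑ k ∈ Tᶜ.disjSum (Finset.range n₀ ×ˢ T),
      Sum.elim (fun _ => 1 / (n : ℝ)) (fun _ => 1 / ((n : ℝ) * n₀)) k
        * f (Sum.elim x (fun p : ℕ × Fin n => y p.1 p.2) k ω) := by
  ext ω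
  simp [adaptiveEstimator, Finset.sum_disjSum, Finset.sum_product, Finset.mul_sum, add_comm]

section Estimator

variable {Ω V : Type*} [MeasurableSpace Ω] [MeasurableSpace V] {P : Measure Ω} {μ : Measure V}
  {f : V → ℝ} {n n₀ : ℕ} {T : Finset (Fin n)} {E : Fin n → Set V}
  {x : Fin n → Ω → V} {y : ℕ → Fin n → Ω → V}

theorem integral_adaptiveEstimator (hn : 0 < n) (hEm : ∀ i, MeasurableSet (E i))
    (hdisj : Pairwise (Function.onFun Disjoint E)) (hEμ : ∀ i, μ (E i) = 1 / n) {Q : Set V}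
    (hEQ : ∀ i, E i ⊆ Q) (hcov : μ (Q \ ⋃ i, E i) = 0)
    (hx : ∀ i, pdf.IsUniform (x i) (E i) P μ) (hy : ∀ j i, pdf.IsUniform (y j i) (E i) P μ)
    (hfm : Measurable f) {D : ℝ} (hfD : ∀ i, ∀ z ∈ E i, |f z| ≤ D)
    (hn₀ : n₀ = ⌈(n : ℝ) / T.card⌉₊) :
    ∫ ω, adaptiveEstimator f n n₀ T x y ω ∂P = ∫ z in Q, f z ∂μ := by
  have hns : ∀ i, μ (E i) ≠ 0 := fun i => by simp [hEμ]
  have hnt : ∀ i, μ (E i) ≠ ∞ := fun i => by simp [hEμ, hn.ne']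
  have hint : ∀ {X : Ω → V} {i}, pdf.IsUniform X (E i) P μ → Integrable (fun ω => f (X ω)) P :=
    fun hX => memLp_one_iff_integrable.1 <|
      hX.memLp_comp (hns _) (hnt _) (hEm _) hfm.aestronglyMeasurable (hfD _) 1
  have hmean : ∀ {X : Ω → V} {i}, pdf.IsUniform X (E i) P μ →
      ∫ ω, f (X ω) ∂P = n * ∫ z in E i, f z ∂μ := fun hX => by
    rw [hX.integral_comp (hns _) (hnt _) hfm.aestronglyMeasurable, hEμ]
    simp
  have hfE : ∀ i, IntegrableOn f (E i) μ := fun i =>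
    Measure.integrableOn_of_bounded (hnt i) hfm.aestronglyMeasurable
      (ae_restrict_of_forall_mem (hEm i) (hfD i))
  have hyint : ∀ j, Integrable (fun ω => ∑ i ∈ T, f (y j i ω)) P := fun j =>
    integrable_finsetSum _ fun i _ => hint (hy j i)
  unfold adaptiveEstimator
  rw [integral_add ((integrable_finsetSum _ fun j _ => hyint j).const_mul _)
      ((integrable_finsetSum _ fun i _ => hint (hx i)).const_mul _),
    integral_const_mul, integral_const_mul, integral_finsetSum _ fun j _ => hyint j,
    integral_finsetSum _ fun i _ => hint (hx i)]
  simp only [fun j => integral_finsetSum T fun i _ => hint (hy j i), hmean (hx _),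
    hmean (hy _ _), Finset.sum_const, Finset.card_range, nsmul_eq_mul, ← Finset.mul_sum]
  rw [setIntegral_eq_sum_of_ae_cover hEm hdisj hEQ hcov hfE, ← Finset.sum_add_sum_compl T]
  rcases T.eq_empty_or_nonempty with rfl | hT
  · simp [hn.ne']
  · have : (n₀ : ℝ) ≠ 0 := by rw [hn₀]; exact_mod_cast ceil_div_ne_zero hn hT.card_pos
    field_simp

theorem variance_adaptiveEstimator
    (hZ : iIndepFun (Sum.elim x fun p : ℕ × Fin n => y p.1 p.2) P) (hfm : Measurable f)
    (hx : ∀ i, MemLp (fun ω => f (x i ω)) 2 P) (hy : ∀ j i, MemLp (fun ω => f (y j i ω)) 2 P) :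
    variance (adaptiveEstimator f n n₀ T x y) P
      = (1 / (n : ℝ)) ^ 2 * ∑ i ∈ Tᶜ, variance (fun ω => f (x i ω)) P
        + (1 / ((n : ℝ) * n₀)) ^ 2 * ∑ j ∈ Finset.range n₀, ∑ i ∈ T,
          variance (fun ω => f (y j i ω)) P := by
  rw [adaptiveEstimator_eq_sum, hZ.variance_sum_mul_comp hfm _ (by
    rintro (i | ⟨j, i⟩) _
    exacts [hx i, hy j i])]
  simp [Finset.sum_disjSum, Finset.sum_product, Finset.mul_sum]

theorem variance_adaptiveEstimator_le (hn : 0 < n) (hEm : ∀ i, MeasurableSet (E i))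
    (hEμ : ∀ i, μ (E i) = 1 / n) (hx : ∀ i, pdf.IsUniform (x i) (E i) P μ)
    (hy : ∀ j i, pdf.IsUniform (y j i) (E i) P μ)
    (hZ : iIndepFun (Sum.elim x fun p : ℕ × Fin n => y p.1 p.2) P) (hfm : Measurable f)
    {D : ℝ} (hfD : ∀ i, ∀ z ∈ E i, |f z| ≤ D) {B : ℝ}
    (hdev : ∀ i ∉ T, ∃ c, ∀ z ∈ E i, |f z - c| ≤ B) {τ : ℝ} (hτ : (T.card : ℝ) / n ≤ τ)
    (hn₀ : n₀ = ⌈(n : ℝ) / T.card⌉₊) :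
    variance (adaptiveEstimator f n n₀ T x y) P ≤ (B ^ 2 + τ ^ 2 * D ^ 2) / n := by
  have hns : ∀ i, μ (E i) ≠ 0 := fun i => by simp [hEμ]
  have hnt : ∀ i, μ (E i) ≠ ∞ := fun i => by simp [hEμ, hn.ne']
  have hvar : ∀ {X : Ω → V} {i c B}, pdf.IsUniform X (E i) P μ →
      (∀ z ∈ E i, |f z - c| ≤ B) → variance (fun ω => f (X ω)) P ≤ B ^ 2 := fun hX =>
    hX.variance_comp_le (hns _) (hnt _) (hEm _) hfm.aestronglyMeasurable
  have hmem : ∀ {X : Ω → V} {i}, pdf.IsUniform X (E i) P μ → MemLp (fun ω => f (X ω)) 2 P :=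
    fun hX => hX.memLp_comp (hns _) (hnt _) (hEm _) hfm.aestronglyMeasurable (hfD _) 2
  have hinterior : ∑ i ∈ Tᶜ, variance (fun ω => f (x i ω)) P ≤ n * B ^ 2 := by
    refine (Finset.sum_le_card_nsmul _ _ (B ^ 2) fun i hi => ?_).trans ?_
    · obtain ⟨c, hc⟩ := hdev i (Finset.mem_compl.1 hi)
      exact hvar (hx i) hc
    · rw [nsmul_eq_mul]
      gcongr
      exact_mod_cast card_finset_fin_le _
  have hboundary : ∑ j ∈ Finset.range n₀, ∑ i ∈ T, variance (fun ω => f (y j i ω)) P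
      ≤ n₀ * (T.card * D ^ 2) := by
    refine (Finset.sum_le_card_nsmul _ _ _ fun j _ =>
      Finset.sum_le_card_nsmul _ _ (D ^ 2) fun i _ => hvar (hy j i) (c := 0) ?_).trans ?_
    · simpa using hfD i
    · simp
  have hweight : (1 / ((n : ℝ) * n₀)) ^ 2 * (n₀ * (T.card * D ^ 2))
      = T.card / (n ^ 2 * n₀) * D ^ 2 := by
    rcases eq_or_ne (n₀ : ℝ) 0 with h | h
    · simp [h]
    · field_simp
  rw [variance_adaptiveEstimator hZ hfm (fun i => hmem (hx i)) fun j i => hmem (hy j i)]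
  calc _ ≤ (1 / (n : ℝ)) ^ 2 * (n * B ^ 2)
        + (1 / ((n : ℝ) * n₀)) ^ 2 * (n₀ * (T.card * D ^ 2)) := by gcongr
    _ ≤ B ^ 2 / n + ((T.card : ℝ) / n) ^ 2 * D ^ 2 / n := by
        rw [hweight, hn₀, ← div_mul_eq_mul_div]
        exact add_le_add (by field_simp; rfl)
          (mul_le_mul_of_nonneg_right (div_sq_mul_ceil_div_le hn) (sq_nonneg D))
    _ ≤ (B ^ 2 + τ ^ 2 * D ^ 2) / n := by
        rw [add_div]
        gcongr

end Estimator

theorem sq_mul_rpow_neg_one_div_div {n : ℕ} (hn : 0 < n) (d : ℕ) (a : ℝ) :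
    (a * (n : ℝ) ^ (-(1 : ℝ) / d)) ^ 2 / n = a ^ 2 * (n : ℝ) ^ (-(1 : ℝ) - 2 / d) := by
  rw [mul_pow, mul_div_assoc, ← Real.rpow_natCast ((n : ℝ) ^ (-(1 : ℝ) / d)) 2,
    ← Real.rpow_mul n.cast_nonneg, ← Real.rpow_sub_one (by positivity)]
  congr 2
  push_cast
  ring

open scoped Classical in
theorem adaptive_stratified_estimator_general (d : ℕ)
    (S : Set (EuclideanSpace ℝ (Fin d)))
    (hS : S ⊆ {y : EuclideanSpace ℝ (Fin d) | ∀ j, y j ∈ Set.Icc (0 : ℝ) 1})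
    (hSmeas : MeasurableSet S)
    (MC : ℝ)
    (hMC : Tendsto (fun ε : ℝ =>
        (volume (Metric.cthickening ε (frontier S))).toReal / (2 * ε))
      (nhdsWithin 0 (Set.Ioi 0)) (nhds MC))
    (g : EuclideanSpace ℝ (Fin d) → ℝ) (hgm : Measurable g) (M D : ℝ)
    (hLip : ∀ u v, |g u - g v| ≤ M * ‖u - v‖)
    (hbdd : ∀ u ∈ {y : EuclideanSpace ℝ (Fin d) | ∀ j, y j ∈ Set.Icc (0 : ℝ) 1}, |g u| ≤ D) :
    ∃ C : ℝ, ∀ n : ℕ, 0 < n →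
      ∀ (Ω' : Type) (_ : MeasureSpace Ω'), IsProbabilityMeasure (ℙ : Measure Ω') →
      ∀ E : Fin n → Set (EuclideanSpace ℝ (Fin d)),
        (∀ i, MeasurableSet (E i)) →
        (∀ i, E i ⊆ {y : EuclideanSpace ℝ (Fin d) | ∀ j, y j ∈ Set.Icc (0 : ℝ) 1}) →
        Pairwise (Function.onFun Disjoint E) →
        (∀ i, volume (E i) = 1 / n) →
        volume ({y : EuclideanSpace ℝ (Fin d) | ∀ j, y j ∈ Set.Icc (0 : ℝ) 1}
          \ ⋃ i, E i) = 0 →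
        (∀ i, Metric.diam (E i) ≤ 2 * Real.sqrt (d + 3) * (n : ℝ) ^ (-(1 : ℝ) / d)) →
        -- boundary strata and the number of repeated samples per boundary stratum
        ∀ (T : Finset (Fin n)),
          T = Finset.univ.filter (fun i => (E i ∩ S).Nonempty ∧ ¬ E i ⊆ S) →
        ∀ n₀ : ℕ, n₀ = ⌈(n : ℝ) / (T.card : ℝ)⌉₊ →
        -- the random samples: `x i` for ordinary strata, `y j i` for repeated
        -- sampling of boundary strata; all mutually independent
        ∀ (x : Fin n → Ω' → EuclideanSpace ℝ (Fin d))
          (y : ℕ → Fin n → Ω' → EuclideanSpace ℝ (Fin d)),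
          iIndepFun
            (Sum.elim x (fun p : ℕ × Fin n => y p.1 p.2)) ℙ →
          (∀ i, Measure.map (x i) ℙ = (n : ℝ≥0∞) • volume.restrict (E i)) →
          (∀ j i, Measure.map (y j i) ℙ = (n : ℝ≥0∞) • volume.restrict (E i)) →
          (∫ ω, ((1 / ((n : ℝ) * n₀)) * ∑ j ∈ Finset.range n₀, ∑ i ∈ T,
                Set.indicator S g (y j i ω)
              + (1 / (n : ℝ)) * ∑ i ∈ Tᶜ, Set.indicator S g (x i ω)) ∂ℙ
            = ∫ z in {y : EuclideanSpace ℝ (Fin d) | ∀ j, y j ∈ Set.Icc (0 : ℝ) 1},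
                Set.indicator S g z) ∧
          variance (fun ω => (1 / ((n : ℝ) * n₀)) * ∑ j ∈ Finset.range n₀, ∑ i ∈ T,
                Set.indicator S g (y j i ω)
              + (1 / (n : ℝ)) * ∑ i ∈ Tᶜ, Set.indicator S g (x i ω)) ℙ
            ≤ C * (n : ℝ) ^ (-(1 : ℝ) - 2 / d) := by
  obtain ⟨K, hK⟩ := exists_min_one_le_mul_of_tendsto_div hMC
  refine ⟨(M ^ 2 + (2 * K * D) ^ 2) * (4 * (d + 3)), ?_⟩
  intro n hn Ω' _ _ E hEm hEQ hEdisj hEμ hEcov hEdiam T hT n₀ hn₀ x y hZ hx hy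
  set δ := 2 * Real.sqrt (d + 3) * (n : ℝ) ^ (-(1 : ℝ) / d)
  have hQ := isBounded_unitCube_s19 d
  have hEb : ∀ i, Bornology.IsBounded (E i) := fun i => hQ.subset (hEQ i)
  have hfm := hgm.indicator hSmeas
  have hfD : ∀ i, ∀ z ∈ E i, |S.indicator g z| ≤ D := fun i z hz =>
    (norm_indicator_le_norm_self g z).trans (hbdd z (hEQ i hz))
  have hux := fun i => pdf.isUniform_of_map_eq_smul_restrict (hEμ i) (hx i)
  have huy := fun j i => pdf.isUniform_of_map_eq_smul_restrict (hEμ i) (hy j i)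
  refine ⟨integral_adaptiveEstimator hn hEm hEdisj hEμ hEQ hEcov hux huy hfm hfD hn₀, ?_⟩
  have hTn : (T.card : ℝ) / n ≤ K * (2 * δ) :=
    (card_boundary_div_le hEm hEdisj hEμ hEb hEdiam
      ((hQ.subset hS).closure.subset frontier_subset_closure).cthickening.measure_lt_top.ne
      fun i hi => by simpa [hT] using hi).trans (hK _ (by positivity))
  have hdev : ∀ i ∉ T, ∃ c, ∀ z ∈ E i, |S.indicator g z - c| ≤ |M| * δ := fun i hi => by
    obtain ⟨c, hc⟩ := exists_abs_indicator_sub_le_of_not_boundary (fun u _ v _ => hLip u v)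
      (hEb i) (by simpa [hT] using hi)
    exact ⟨c, fun z hz => (hc z hz).trans (by gcongr; exact hEdiam i)⟩
  calc _ ≤ ((|M| * δ) ^ 2 + (K * (2 * δ)) ^ 2 * D ^ 2) / n :=
        variance_adaptiveEstimator_le hn hEm hEμ hux huy hZ hfm hfD hdev hTn hn₀
    _ = (M ^ 2 + (2 * K * D) ^ 2) * (δ ^ 2 / n) := by rw [mul_pow, sq_abs]; ring
    _ = _ := by
        rw [sq_mul_rpow_neg_one_div_div hn, mul_pow 2 √_, Real.sq_sqrt (by positivity)]
        ring

open scoped Classical in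
/-- The adaptive stratified estimator, which oversamples the boundary strata of a
discontinuous integrand `f = g·1_Ω`, is unbiased and has variance `O(n^{-1-2/d})`. -/
theorem adaptive_stratified_estimator (d : ℕ) (hd : 1 ≤ d)
    (S : Set (EuclideanSpace ℝ (Fin d)))
    (hS : S ⊆ {y : EuclideanSpace ℝ (Fin d) | ∀ j, y j ∈ Set.Icc (0 : ℝ) 1})
    (hSmeas : MeasurableSet S)
    (MC : ℝ)
    (hMC : Tendsto (fun ε : ℝ =>
        (volume (Metric.cthickening ε (frontier S))).toReal / (2 * ε))
      (nhdsWithin 0 (Set.Ioi 0)) (nhds MC))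
    (g : EuclideanSpace ℝ (Fin d) → ℝ) (hgm : Measurable g) (M D : ℝ)
    (hLip : ∀ u v, |g u - g v| ≤ M * ‖u - v‖)
    (hbdd : ∀ u ∈ {y : EuclideanSpace ℝ (Fin d) | ∀ j, y j ∈ Set.Icc (0 : ℝ) 1}, |g u| ≤ D) :
    ∃ C : ℝ, ∀ n : ℕ, 0 < n →
      ∀ (Ω' : Type) (_ : MeasureSpace Ω'), IsProbabilityMeasure (ℙ : Measure Ω') →
      ∀ E : Fin n → Set (EuclideanSpace ℝ (Fin d)),
        (∀ i, MeasurableSet (E i)) →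
        (∀ i, E i ⊆ {y : EuclideanSpace ℝ (Fin d) | ∀ j, y j ∈ Set.Icc (0 : ℝ) 1}) →
        Pairwise (Function.onFun Disjoint E) →
        (∀ i, volume (E i) = 1 / n) →
        volume ({y : EuclideanSpace ℝ (Fin d) | ∀ j, y j ∈ Set.Icc (0 : ℝ) 1}
          \ ⋃ i, E i) = 0 →
        (∀ i, Metric.diam (E i) ≤ 2 * Real.sqrt (d + 3) * (n : ℝ) ^ (-(1 : ℝ) / d)) →
        -- boundary strata and the number of repeated samples per boundary stratum
        ∀ (T : Finset (Fin n)),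
          T = Finset.univ.filter (fun i => (E i ∩ S).Nonempty ∧ ¬ E i ⊆ S) →
        ∀ n₀ : ℕ, n₀ = ⌈(n : ℝ) / (T.card : ℝ)⌉₊ →
        -- the random samples: `x i` for ordinary strata, `y j i` for repeated
        -- sampling of boundary strata; all mutually independent
        ∀ (x : Fin n → Ω' → EuclideanSpace ℝ (Fin d))
          (y : ℕ → Fin n → Ω' → EuclideanSpace ℝ (Fin d)),
          iIndepFun
            (Sum.elim x (fun p : ℕ × Fin n => y p.1 p.2)) ℙ →
          (∀ i, Measure.map (x i) ℙ = (n : ℝ≥0∞) • volume.restrict (E i)) →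
          (∀ j i, Measure.map (y j i) ℙ = (n : ℝ≥0∞) • volume.restrict (E i)) →
          (∫ ω, ((1 / ((n : ℝ) * n₀)) * ∑ j ∈ Finset.range n₀, ∑ i ∈ T,
                Set.indicator S g (y j i ω)
              + (1 / (n : ℝ)) * ∑ i ∈ Tᶜ, Set.indicator S g (x i ω)) ∂ℙ
            = ∫ z in {y : EuclideanSpace ℝ (Fin d) | ∀ j, y j ∈ Set.Icc (0 : ℝ) 1},
                Set.indicator S g z) ∧
          variance (fun ω => (1 / ((n : ℝ) * n₀)) * ∑ j ∈ Finset.range n₀, ∑ i ∈ T,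
                Set.indicator S g (y j i ω)
              + (1 / (n : ℝ)) * ∑ i ∈ Tᶜ, Set.indicator S g (x i ω)) ℙ
            ≤ C * (n : ℝ) ^ (-(1 : ℝ) - 2 / d) :=
  adaptive_stratified_estimator_general d S hS hSmeas MC hMC g hgm M D hLip hbdd
end
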